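/- arXiv:1312.0921 — 14 statements merged into one kernel-verified Lean document; each statement's English description precedes it below -/
import Mathlib

section
/- For n ≥ 1, if p is a prime dividing y_i with i < n, then p divides t_n / y_j for every j < n with j ≠ i, and p does not divide t_n / y_i. -/
theorem sylvester_prime_divides_quotients
    (y : ℕ → ℕ)
    (hy0 : y 0 = 2)
    (hy : ∀ m, 1 ≤ m → y m = 1 + ∏ i ∈ Finset.range m, y i)
    : ∀ n i p : ℕ, 1 ≤ n → i < n → p.Prime → p ∣ y i →
      (∀ j, j < n → j ≠ i → p ∣ (y n - 1) / y j) ∧ ¬ p ∣ (y n - 1) / y i := by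
  have hpos : ∀ m, 0 < y m := by
    intro m
    cases m with
    | zero => omega
    | succ k => rw [hy (k+1) (by omega)]; omega
  have hsub : ∀ n, 1 ≤ n → y n - 1 = ∏ i ∈ Finset.range n, y i := by
    intro n hn; rw [hy n hn]; omega
  have key : ∀ a b p : ℕ, a < b → p.Prime → p ∣ y a → p ∣ y b → False := by
    intro a b p hab hp ha hb
    have h1 : p ∣ ∏ i ∈ Finset.range b, y i :=
      ha.trans (Finset.dvd_prod_of_mem _ (Finset.mem_range.2 hab))
    have h2 : p ∣ y b - ∏ i ∈ Finset.range b, y i := Nat.dvd_sub hb h1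
    have h3 : y b - ∏ i ∈ Finset.range b, y i = 1 := by rw [hy b (by omega)]; omega
    rw [h3] at h2
    have := Nat.le_of_dvd one_pos h2
    have := hp.two_le
    omega
  intro n i p hn hi hp hpi
  have hquot : ∀ j, j < n → (y n - 1) / y j = ∏ k ∈ (Finset.range n).erase j, y k := by
    intro j hj
    rw [hsub n hn, ← Finset.prod_erase_mul _ _ (Finset.mem_range.2 hj)]
    exact Nat.mul_div_cancel _ (hpos j)
  constructor
  · intro j hj hji
    rw [hquot j hj]
    exact hpi.trans (Finset.dvd_prod_of_mem _
      (Finset.mem_erase.2 ⟨hji.symm, Finset.mem_range.2 hi⟩))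
  · rw [hquot i hi]
    intro hdvd
    obtain ⟨k, hk, hpk⟩ := hp.prime.exists_mem_finset_dvd hdvd
    have hki := Finset.mem_erase.1 hk
    rcases lt_or_gt_of_ne hki.1 with h | h
    · exact key k i p h hp hpk hpi
    · exact key i k p h hp hpi hpk
end

section
/- For n ≥ 1 and i ∈ {0,…,n-1}, the Sylvester number y_i divides t_n/y_i + 1, and y_i does not divide 2·t_n/y_i + 1. -/
theorem sylvester_divides_quotient_plus_one
    (y : ℕ → ℕ)
    (hy0 : y 0 = 2)
    (hy : ∀ m, 1 ≤ m → y m = 1 + ∏ i ∈ Finset.range m, y i)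
    : ∀ n i : ℕ, 1 ≤ n → i < n →
      y i ∣ ((y n - 1) / y i + 1) ∧ ¬ y i ∣ (2 * ((y n - 1) / y i) + 1) := by
  have hy2 : ∀ i, 2 ≤ y i := by
    intro i
    induction i using Nat.strong_induction_on with
    | _ i ih =>
      match i with
      | 0 => omega
      | k + 1 =>
        rw [hy (k + 1) (by omega)]
        have h1 : 1 ≤ ∏ j ∈ Finset.range (k + 1), y j :=
          Finset.one_le_prod' fun j hj => by
            have := ih j (Finset.mem_range.mp hj); omega
        omega
  have key : ∀ i, (∏ j ∈ Finset.range i, y j) + 1 = y i := by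
    intro i
    match i with
    | 0 => simp [hy0]
    | k + 1 => rw [hy (k + 1) (by omega)]; ring
  intro n i hn hin
  set P1 := ∏ j ∈ Finset.range i, y j with hP1
  set P2 := ∏ j ∈ Finset.Ico (i + 1) n, y j with hP2
  have hsplit : ∏ j ∈ Finset.range n, y j = y i * (P1 * P2) := by
    have h := Finset.prod_range_mul_prod_Ico y (show i + 1 ≤ n by omega)
    rw [Finset.prod_range_succ] at h
    rw [← h]; ring
  have ht : y n - 1 = ∏ j ∈ Finset.range n, y j := by
    have := key n; omega
  have hq : (y n - 1) / y i = P1 * P2 := by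
    rw [ht, hsplit, Nat.mul_div_cancel_left _ (by have := hy2 i; omega)]
  haveI : Fact (1 < y i) := ⟨by have := hy2 i; omega⟩
  have h1 : (P1 : ZMod (y i)) = -1 := by
    have h0 : ((P1 + 1 : ℕ) : ZMod (y i)) = 0 := by
      rw [key i]; exact ZMod.natCast_self _
    push_cast at h0
    linear_combination h0
  have h2 : (P2 : ZMod (y i)) = 1 := by
    rw [hP2]
    push_cast
    apply Finset.prod_eq_one
    intro j hj
    have hji : i < j := by
      have := Finset.mem_Ico.mp hj; omega
    have : (y j : ZMod (y i)) = ((1 + ∏ k ∈ Finset.range j, y k : ℕ) : ZMod (y i)) := by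
      rw [← hy j (by omega)]
    rw [this, Nat.cast_add, Nat.cast_one,
      (ZMod.natCast_eq_zero_iff _ _).mpr
      (Finset.dvd_prod_of_mem y (Finset.mem_range.mpr hji))]
    ring
  rw [hq]
  constructor
  · rw [← ZMod.natCast_eq_zero_iff]
    push_cast
    rw [h1, h2]; ring
  · rw [← ZMod.natCast_eq_zero_iff]
    push_cast
    rw [h1, h2]
    intro h
    have : (1 : ZMod (y i)) = 0 := by linear_combination -h
    exact one_ne_zero this
end

section
/- For each fixed i ∈ {0,…,n} and fixed a, the sequence m ↦ λ_i^(m,a) is (weakly) increasing in m, and each λ_i^(m,a) is a positive integer. -/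
/-- Auxiliary sequence: `S b 0 = S b 1 = 1`, `S b (m+2) = (b+2) S b (m+1) - S b m`. -/
def lamS (b : ℤ) : ℕ → ℤ
  | 0 => 1
  | 1 => 1
  | (m+2) => (b+2) * lamS b (m+1) - lamS b m

lemma lamS_zero (b : ℤ) : lamS b 0 = 1 := rfl
lemma lamS_one (b : ℤ) : lamS b 1 = 1 := rfl
lemma lamS_succ (b : ℤ) (m : ℕ) :
    lamS b (m+2) = (b+2) * lamS b (m+1) - lamS b m := rfl

lemma lamS_pos_mono (b : ℤ) (hb : 0 ≤ b) :
    ∀ m, 0 < lamS b m ∧ lamS b m ≤ lamS b (m+1) := by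
  intro m
  induction m with
  | zero => simp [lamS_zero, lamS_one]
  | succ m ih =>
    obtain ⟨h1, h2⟩ := ih
    have h3 : 0 < lamS b (m+1) := lt_of_lt_of_le h1 h2
    refine ⟨h3, ?_⟩
    rw [lamS_succ]
    nlinarith

lemma lamS_det (b : ℤ) : ∀ m, lamS b m * lamS b (m+2) = (lamS b (m+1))^2 + b := by
  intro m
  induction m with
  | zero => rw [lamS_succ]; simp [lamS_zero, lamS_one]; ring
  | succ m ih =>
    have h1 : lamS b (m+1+2) = (b+2) * lamS b (m+2) - lamS b (m+1) := lamS_succ b (m+1)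
    have h2 : lamS b (m+2) = (b+2) * lamS b (m+1) - lamS b m := lamS_succ b m
    linear_combination lamS b (m+1) * h1 - lamS b (m+2) * h2 + ih

theorem lambda_monotone_pos
    (n a : ℕ) (hn : 4 ≤ n) (ha : a ≤ n - 2)
    (y : ℕ → ℕ)
    (hy0 : y 0 = 2)
    (hy : ∀ m, 1 ≤ m → y m = 1 + ∏ i ∈ Finset.range m, y i)
    (k : ℕ → ℕ)
    (hk : Set.BijOn k (Set.Icc 3 n) (Set.Iic (n - 2) \ {a}))
    (L : ℕ → ℕ → ℚ)
    (hL00 : L 0 0 = 1)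
    (hL01 : L 0 1 = 2 * ((y (n - 1) : ℚ) - 1) / (y a : ℚ))
    (hL02 : L 0 2 = 1)
    (hL0i : ∀ i, 3 ≤ i → i ≤ n → L 0 i = 2 * ((y (n - 1) : ℚ) - 1) / (y (k i) : ℚ))
    (hR0 : ∀ m, L (m + 1) 0 = L m 2)
    (hR1 : ∀ m, L (m + 1) 1 = L m 1)
    (hR2 : ∀ m, L (m + 1) 2 = (L m 1 + L m 2) ^ 2 / L m 0)
    (hRi : ∀ m i, 3 ≤ i → i ≤ n → L (m + 1) i = L m i * (L m 1 + L m 2) / L m 0)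
    : ∀ i, i ≤ n →
      (Monotone fun m => L m i) ∧ (∀ m, ∃ z : ℤ, 0 < z ∧ L m i = (z : ℚ)) := by
  -- positivity of y
  have ypos : ∀ m, 0 < y m := by
    intro m
    cases m with
    | zero => omega
    | succ m => rw [hy (m+1) (by omega)]; omega
  -- the product
  set P : ℕ := ∏ i ∈ Finset.range (n-1), y i with hPdef
  have hP : y (n-1) = 1 + P := hy (n-1) (by omega)
  have hPpos : 0 < P := Finset.prod_pos (fun i _ => ypos i)
  have hcast : ((y (n-1) : ℚ)) - 1 = (P : ℚ) := by rw [hP]; push_cast; ring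
  have hdvd : ∀ j, j ≤ n - 2 → y j ∣ P :=
    fun j hj => Finset.dvd_prod_of_mem y (Finset.mem_range.mpr (by omega))
  -- the generic value lemma
  have hval : ∀ j, j ≤ n - 2 → ∃ q : ℕ, 0 < q ∧
      2 * ((y (n-1) : ℚ) - 1) / (y j : ℚ) = (2 * q : ℕ) := by
    intro j hj
    obtain ⟨q, hq⟩ := hdvd j hj
    have hqpos : 0 < q := by
      rcases Nat.eq_zero_or_pos q with h | h
      · rw [h, Nat.mul_zero] at hq; omega
      · exact h
    refine ⟨q, hqpos, ?_⟩
    have hyj : ((y j : ℚ)) ≠ 0 := by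
      have := ypos j; positivity
    rw [hcast, hq]
    push_cast
    field_simp
  -- b
  obtain ⟨qb, hqb, hqbL⟩ := hval a ha
  set b : ℤ := ((2 * qb : ℕ) : ℤ) with hbdef
  have hb0 : 0 < b := by simp [hbdef]; omega
  have hb0' : (0:ℤ) ≤ b := le_of_lt hb0
  have hLb : L 0 1 = (b : ℚ) := by rw [hL01, hqbL]; push_cast [hbdef]; ring
  -- initial values for i ≥ 3 are positive integers
  have hCi : ∀ i, 3 ≤ i → i ≤ n → ∃ c : ℤ, 0 < c ∧ L 0 i = (c : ℚ) := by
    intro i h3 hin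
    have hki : k i ≤ n - 2 := by
      have := hk.mapsTo (⟨h3, hin⟩ : i ∈ Set.Icc 3 n)
      exact this.1
    obtain ⟨q, hq, hqL⟩ := hval (k i) hki
    exact ⟨(2*q : ℕ), by exact_mod_cast Nat.pos_of_ne_zero (by omega),
      by rw [hL0i i h3 hin, hqL]; push_cast; ring⟩
  -- facts about S
  have Spos : ∀ m, (0:ℤ) < lamS b m := fun m => (lamS_pos_mono b hb0' m).1
  have Smono : ∀ m, lamS b m ≤ lamS b (m+1) := fun m => (lamS_pos_mono b hb0' m).2
  have SposQ : ∀ m, (0:ℚ) < ((lamS b m : ℤ) : ℚ) := fun m => by exact_mod_cast Spos m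
  have SmonoQ : ∀ m, ((lamS b m : ℤ) : ℚ) ≤ ((lamS b (m+1) : ℤ) : ℚ) :=
    fun m => by exact_mod_cast Smono m
  have SdetQ : ∀ m, ((lamS b m : ℤ):ℚ) * ((lamS b (m+2) : ℤ):ℚ)
      = ((lamS b (m+1) : ℤ):ℚ)^2 + (b:ℚ) := fun m => by exact_mod_cast lamS_det b m
  -- the key closed form
  have key : ∀ m, L m 0 = ((lamS b m : ℤ):ℚ)^2 ∧ L m 1 = (b:ℚ)
      ∧ L m 2 = ((lamS b (m+1) : ℤ):ℚ)^2
      ∧ ∀ i, 3 ≤ i → i ≤ n →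
          L m i = L 0 i * ((lamS b (m+1) : ℤ):ℚ) * ((lamS b m : ℤ):ℚ) := by
    intro m
    induction m with
    | zero =>
      refine ⟨by rw [hL00]; simp [lamS_zero], hLb, by rw [hL02]; simp [lamS_one], ?_⟩
      intro i h3 hin
      simp [lamS_zero, lamS_one]
    | succ m ih =>
      obtain ⟨ih0, ih1, ih2, ihi⟩ := ih
      have hdet : (b:ℚ) + ((lamS b (m+1) : ℤ):ℚ)^2
          = ((lamS b m : ℤ):ℚ) * ((lamS b (m+2) : ℤ):ℚ) := by
        rw [SdetQ m]; ring
      have hne : ((lamS b m : ℤ):ℚ) ≠ 0 := ne_of_gt (SposQ m)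
      refine ⟨by rw [hR0, ih2], by rw [hR1, ih1], ?_, ?_⟩
      · rw [hR2, ih0, ih1, ih2]
        rw [div_eq_iff (by positivity : ((lamS b m : ℤ):ℚ)^2 ≠ 0), hdet]
        ring
      · intro i h3 hin
        rw [hRi m i h3 hin, ihi i h3 hin, ih0, ih1, ih2, hdet]
        field_simp
  -- conclusion
  intro i hin
  match i with
  | 0 =>
    constructor
    · apply monotone_nat_of_le_succ
      intro m
      show L m 0 ≤ L (m+1) 0
      rw [(key m).1, (key (m+1)).1]
      have p1 := SposQ m
      have q1 := SmonoQ m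
      nlinarith
    · intro m
      refine ⟨(lamS b m)^2, by have := Spos m; positivity, ?_⟩
      rw [(key m).1]; push_cast; ring
  | 1 =>
    constructor
    · have heq : (fun m => L m 1) = fun _ => (b:ℚ) := funext fun m => (key m).2.1
      rw [heq]; exact monotone_const
    · intro m; exact ⟨b, hb0, (key m).2.1⟩
  | 2 =>
    constructor
    · apply monotone_nat_of_le_succ
      intro m
      show L m 2 ≤ L (m+1) 2
      rw [(key m).2.2.1, (key (m+1)).2.2.1]
      have p1 := SposQ (m+1)
      have q1 := SmonoQ (m+1)
      nlinarith
    · intro m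
      refine ⟨(lamS b (m+1))^2, by have := Spos (m+1); positivity, ?_⟩
      rw [(key m).2.2.1]; push_cast; ring
  | (i+3) =>
    obtain ⟨c, hc, hcL⟩ := hCi (i+3) (by omega) hin
    have hc' : (0:ℚ) < (c:ℚ) := by exact_mod_cast hc
    constructor
    · apply monotone_nat_of_le_succ
      intro m
      show L m (i+3) ≤ L (m+1) (i+3)
      rw [(key m).2.2.2 _ (by omega) hin, (key (m+1)).2.2.2 _ (by omega) hin, hcL]
      have p1 := SposQ m
      have p2 := SposQ (m+1)
      have q1 := SmonoQ m
      have q2 := SmonoQ (m+1)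
      nlinarith [mul_le_mul_of_nonneg_left (q1.trans q2) p2.le]
    · intro m
      refine ⟨c * lamS b (m+1) * lamS b m,
        mul_pos (mul_pos hc (Spos (m+1))) (Spos m), ?_⟩
      rw [(key m).2.2.2 _ (by omega) hin, hcL]
      push_cast; ring
end

section
/- For every m ≥ 0, the three integers λ_0^(m,a), λ_1^(m,a), λ_2^(m,a) are pairwise coprime. -/
/-!
With `B = λ₁⁽⁰⁾ = 2 ∏_{i < n-1, i ≠ a} yᵢ`, the first three entries are `(vₘ², B, vₘ₊₁²)`
for the integer sequence `v₀ = v₁ = 1`, `vₘ₊₂ = (B + 2) vₘ₊₁ - vₘ`, which satisfies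
`vₘ₊₂ vₘ = vₘ₊₁² + B`. Consecutive terms of `v` are coprime (the recursion is unimodular), and
every term is `≡ 1 (mod B)`, hence coprime to `B`.
-/

open Finset

/-- `λ₀⁽ᵐ⁾ = (sqrtSeq B m)²` and `λ₂⁽ᵐ⁾ = (sqrtSeq B (m + 1))²`, where `B = λ₁⁽⁰⁾`. -/
def sqrtSeq (B : ℤ) : ℕ → ℤ
  | 0 => 1
  | 1 => 1
  | m + 2 => (B + 2) * sqrtSeq B (m + 1) - sqrtSeq B m

namespace sqrtSeq

variable (B : ℤ)

@[simp] lemma zero : sqrtSeq B 0 = 1 := rfl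

@[simp] lemma one : sqrtSeq B 1 = 1 := rfl

lemma add_two (m : ℕ) : sqrtSeq B (m + 2) = (B + 2) * sqrtSeq B (m + 1) - sqrtSeq B m := rfl

lemma one_le {B : ℤ} (hB : 0 ≤ B) (m : ℕ) : 1 ≤ sqrtSeq B m := by
  have h : ∀ m, 1 ≤ sqrtSeq B m ∧ sqrtSeq B m ≤ sqrtSeq B (m + 1) := by
    intro m
    induction m with
    | zero => simp
    | succ m ih =>
      refine ⟨by linarith [ih.1, ih.2], ?_⟩
      rw [add_two]
      nlinarith [ih.1, ih.2]
  exact (h m).1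

lemma add_two_mul (m : ℕ) : sqrtSeq B (m + 2) * sqrtSeq B m = sqrtSeq B (m + 1) ^ 2 + B := by
  induction m with
  | zero => simp [add_two]; ring
  | succ m ih =>
    rw [add_two B (m + 1)]
    linear_combination ih - sqrtSeq B (m + 2) * add_two B m

lemma isCoprime_succ (m : ℕ) : IsCoprime (sqrtSeq B m) (sqrtSeq B (m + 1)) := by
  induction m with
  | zero => exact isCoprime_one_left
  | succ m ih =>
    rw [add_two, sub_eq_neg_add, mul_comm]
    exact ih.symm.neg_right.add_mul_left_right (B + 2)

lemma dvd_sub_one (m : ℕ) : B ∣ sqrtSeq B m - 1 := by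
  induction m using Nat.twoStepInduction with
  | zero => simp
  | one => simp
  | more m ih₀ ih₁ =>
    have h : sqrtSeq B (m + 2) - 1
        = B * sqrtSeq B (m + 1) + 2 * (sqrtSeq B (m + 1) - 1) - (sqrtSeq B m - 1) := by
      rw [add_two]; ring
    rw [h]
    exact dvd_sub (dvd_add (dvd_mul_right _ _) (dvd_mul_of_dvd_right ih₁ 2)) ih₀

lemma isCoprime_left (m : ℕ) : IsCoprime B (sqrtSeq B m) := by
  obtain ⟨c, hc⟩ := dvd_sub_one B m
  rw [sub_eq_iff_eq_add'.mp hc]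
  exact isCoprime_one_right.add_mul_left_right c

lemma pairwise_isCoprime_triple (m : ℕ) :
    Pairwise fun i j : Fin 3 => IsCoprime (![sqrtSeq B m ^ 2, B, sqrtSeq B (m + 1) ^ 2] i)
      (![sqrtSeq B m ^ 2, B, sqrtSeq B (m + 1) ^ 2] j) := by
  have h₀₁ : IsCoprime (sqrtSeq B m ^ 2) B := (isCoprime_left B m).symm.pow_left
  have h₀₂ : IsCoprime (sqrtSeq B m ^ 2) (sqrtSeq B (m + 1) ^ 2) := (isCoprime_succ B m).pow
  have h₁₂ : IsCoprime B (sqrtSeq B (m + 1) ^ 2) := (isCoprime_left B (m + 1)).pow_right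
  intro i j hij
  fin_cases i <;> fin_cases j <;> simp_all [IsCoprime.symm]

end sqrtSeq

lemma lambda_eq_sqrtSeq (L : ℕ → ℕ → ℚ) {B : ℤ} (hB : 0 ≤ B)
    (hL00 : L 0 0 = 1) (hL01 : L 0 1 = B) (hL02 : L 0 2 = 1)
    (hR0 : ∀ m, L (m + 1) 0 = L m 2)
    (hR1 : ∀ m, L (m + 1) 1 = L m 1)
    (hR2 : ∀ m, L (m + 1) 2 = (L m 1 + L m 2) ^ 2 / L m 0) (m : ℕ) :
    L m 0 = (sqrtSeq B m : ℚ) ^ 2 ∧ L m 1 = B ∧ L m 2 = (sqrtSeq B (m + 1) : ℚ) ^ 2 := by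
  induction m with
  | zero => simp [hL00, hL01, hL02]
  | succ m ih =>
    obtain ⟨h₀, h₁, h₂⟩ := ih
    refine ⟨by rw [hR0, h₂], by rw [hR1, h₁], ?_⟩
    have hv : (sqrtSeq B m : ℚ) ≠ 0 := by
      exact_mod_cast (zero_lt_one.trans_le (sqrtSeq.one_le hB m)).ne'
    have hrec : (B : ℚ) + (sqrtSeq B (m + 1) : ℚ) ^ 2 = sqrtSeq B (m + 2) * sqrtSeq B m := by
      rw [add_comm]
      exact_mod_cast (sqrtSeq.add_two_mul B m).symm
    rw [hR2, h₀, h₁, h₂, hrec]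
    field_simp

lemma sub_one_div_eq_prod_erase {y : ℕ → ℕ} {N a : ℕ} (hyN : y N = 1 + ∏ i ∈ range N, y i)
    (ha : a < N) (hya : y a ≠ 0) :
    ((y N : ℚ) - 1) / y a = ∏ i ∈ (range N).erase a, (y i : ℚ) := by
  rw [hyN, div_eq_iff (by exact_mod_cast hya), ← mul_prod_erase _ _ (mem_range.mpr ha)]
  push_cast
  ring

theorem lambda_first_three_pairwise_coprime_general
    (n a : ℕ) (hn : 4 ≤ n) (ha : a ≤ n - 2)
    (y : ℕ → ℕ)
    (hy0 : y 0 = 2)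
    (hy : ∀ m, 1 ≤ m → y m = 1 + ∏ i ∈ Finset.range m, y i)
    (L : ℕ → ℕ → ℚ)
    (hL00 : L 0 0 = 1)
    (hL01 : L 0 1 = 2 * ((y (n - 1) : ℚ) - 1) / (y a : ℚ))
    (hL02 : L 0 2 = 1)
    (hR0 : ∀ m, L (m + 1) 0 = L m 2)
    (hR1 : ∀ m, L (m + 1) 1 = L m 1)
    (hR2 : ∀ m, L (m + 1) 2 = (L m 1 + L m 2) ^ 2 / L m 0)
    : ∀ m, ∃ z : Fin 3 → ℤ, (∀ i : Fin 3, L m (i : ℕ) = (z i : ℚ)) ∧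
      (∀ i j : Fin 3, i ≠ j → IsCoprime (z i) (z j)) := by
  intro m
  have hya : y a ≠ 0 := by
    rcases Nat.eq_zero_or_pos a with rfl | h
    · simp [hy0]
    · simp [hy a h]
  set B : ℤ := ((2 * ∏ i ∈ (range (n - 1)).erase a, y i : ℕ) : ℤ)
  have hL01' : L 0 1 = B := by
    rw [hL01, mul_div_assoc, sub_one_div_eq_prod_erase (hy (n - 1) (by omega)) (by omega) hya]
    simp [B]
  obtain ⟨h₀, h₁, h₂⟩ := lambda_eq_sqrtSeq L (by positivity) hL00 hL01' hL02 hR0 hR1 hR2 m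
  refine ⟨![sqrtSeq B m ^ 2, B, sqrtSeq B (m + 1) ^ 2], ?_, sqrtSeq.pairwise_isCoprime_triple B m⟩
  intro i
  fin_cases i <;> simp [h₀, h₁, h₂]

theorem lambda_first_three_pairwise_coprime
    (n a : ℕ) (hn : 4 ≤ n) (ha : a ≤ n - 2)
    (y : ℕ → ℕ)
    (hy0 : y 0 = 2)
    (hy : ∀ m, 1 ≤ m → y m = 1 + ∏ i ∈ Finset.range m, y i)
    (k : ℕ → ℕ)
    (hk : Set.BijOn k (Set.Icc 3 n) (Set.Iic (n - 2) \ {a}))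
    (L : ℕ → ℕ → ℚ)
    (hL00 : L 0 0 = 1)
    (hL01 : L 0 1 = 2 * ((y (n - 1) : ℚ) - 1) / (y a : ℚ))
    (hL02 : L 0 2 = 1)
    (hL0i : ∀ i, 3 ≤ i → i ≤ n → L 0 i = 2 * ((y (n - 1) : ℚ) - 1) / (y (k i) : ℚ))
    (hR0 : ∀ m, L (m + 1) 0 = L m 2)
    (hR1 : ∀ m, L (m + 1) 1 = L m 1)
    (hR2 : ∀ m, L (m + 1) 2 = (L m 1 + L m 2) ^ 2 / L m 0)
    (hRi : ∀ m i, 3 ≤ i → i ≤ n → L (m + 1) i = L m i * (L m 1 + L m 2) / L m 0)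
    : ∀ m, ∃ z : Fin 3 → ℤ, (∀ i : Fin 3, L m (i : ℕ) = (z i : ℚ)) ∧
      (∀ i j : Fin 3, i ≠ j → IsCoprime (z i) (z j)) :=
  lambda_first_three_pairwise_coprime_general n a hn ha y hy0 hy L hL00 hL01 hL02 hR0 hR1 hR2
end

section
/- For every m ≥ 1, there exists a prime p such that p does not divide λ_0^(m,a) and does not divide λ_1^(m,a), but p divides λ_i^(m,a) for all i with 2 ≤ i ≤ n. -/
/-!
Write `B := λ₁^(0) = 2 t_{n-1} / y_a`, an integer because `y_a ∣ t_{n-1} = y_0 ⋯ y_{n-2}`, and let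
`E = lamSeq B`, which satisfies `E_{m+2} E_m = E_{m+1}² + B`. This identity is exactly what the
mutation rule needs to give, by induction, `λ^(m+1) = (E_m², B, E_{m+1}², λ_i^(0) E_{m+1} E_m)`.
Now `E_{m+1} ≥ 2` is coprime to `B E_m`, so any prime factor of `E_{m+1}` works.
-/

/-- `QDvd d q` means the rational number `q` is `d` times an integer. -/
def QDvd (d : ℕ) (q : ℚ) : Prop := ∃ c : ℤ, q = (d : ℚ) * c

def lamSeq {R : Type*} [CommRing R] (B : R) : ℕ → R
  | 0 => 1
  | 1 => B + 1
  | m + 2 => (B + 2) * lamSeq B (m + 1) - lamSeq B m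

namespace lamSeq

section CommRing

variable {R S : Type*} [CommRing R] [CommRing S] (B : R)

@[simp] theorem zero : lamSeq B 0 = 1 := rfl

@[simp] theorem one : lamSeq B 1 = B + 1 := rfl

theorem add_two (m : ℕ) : lamSeq B (m + 2) = (B + 2) * lamSeq B (m + 1) - lamSeq B m := rfl

theorem add_two_mul (m : ℕ) : lamSeq B (m + 2) * lamSeq B m = lamSeq B (m + 1) ^ 2 + B := by
  have invariant : ∀ m, lamSeq B (m + 1) ^ 2 + lamSeq B m ^ 2
      - (B + 2) * lamSeq B (m + 1) * lamSeq B m = -B := by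
    intro m
    induction m with
    | zero => simp; ring
    | succ m ih => rw [add_two]; linear_combination ih
  rw [add_two]
  linear_combination -invariant m

theorem isCoprime_succ_mul (m : ℕ) : IsCoprime (lamSeq B (m + 1)) (B * lamSeq B m) := by
  induction m with
  | zero => exact ⟨1, -1, by simp⟩
  | succ m ih =>
    have hprev : IsCoprime (lamSeq B (m + 2)) (lamSeq B (m + 1)) := by
      have := ih.of_mul_right_right.symm.neg_left.add_mul_left_left (B + 2)
      rwa [show -lamSeq B m + lamSeq B (m + 1) * (B + 2) = lamSeq B (m + 2) by
        rw [add_two]; ring] at this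
    have hB : IsCoprime (lamSeq B (m + 2)) B := by
      have := ih.of_mul_right_left.symm.pow_right (n := 2) |>.add_mul_left_right 1
      rw [mul_one, ← add_two_mul] at this
      exact this.of_mul_right_left.symm
    exact hB.mul_right hprev

theorem map (f : R →+* S) : ∀ m, f (lamSeq B m) = lamSeq (f B) m
  | 0 => by simp
  | 1 => by simp
  | m + 2 => by simp [add_two, map f (m + 1), map f m, map_ofNat]

@[simp, norm_cast] theorem intCast (B : ℤ) (m : ℕ) : ((lamSeq B m : ℤ) : R) = lamSeq (B : R) m :=
  map B (Int.castRingHom R) m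

end CommRing

section Ordered

variable {R : Type*} [CommRing R] [LinearOrder R] [IsStrictOrderedRing R] {B : R}

theorem monotone (hB : 0 ≤ B) : Monotone (lamSeq B) := by
  have h : ∀ m, 1 ≤ lamSeq B m ∧ lamSeq B m ≤ lamSeq B (m + 1) := by
    intro m
    induction m with
    | zero => simpa using hB
    | succ m ih =>
      refine ⟨ih.1.trans ih.2, ?_⟩
      rw [add_two]
      nlinarith [ih.1, ih.2]
  exact monotone_nat_of_le_succ fun m => (h m).2

theorem one_le (hB : 0 ≤ B) (m : ℕ) : 1 ≤ lamSeq B m :=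
  (zero B).symm.trans_le (monotone hB (Nat.zero_le m))

end Ordered

theorem exists_prime_dvd_succ {B : ℤ} (hB : 0 < B) (m : ℕ) :
    ∃ p : ℕ, p.Prime ∧ (p : ℤ) ∣ lamSeq B (m + 1) ∧ ¬ (p : ℤ) ∣ B ∧ ¬ (p : ℤ) ∣ lamSeq B m := by
  have hge : 2 ≤ lamSeq B (m + 1) :=
    (by simp; omega : 2 ≤ lamSeq B 1).trans (monotone hB.le (by omega))
  obtain ⟨p, hp, hpE⟩ := Nat.exists_prime_and_dvd (n := (lamSeq B (m + 1)).natAbs) (by omega)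
  have hpE : (p : ℤ) ∣ lamSeq B (m + 1) := Int.natCast_dvd.mpr hpE
  have hcop : ¬ (p : ℤ) ∣ B * lamSeq B m := fun h =>
    (Nat.prime_iff_prime_int.mp hp).not_isUnit ((isCoprime_succ_mul B m).isUnit_of_dvd' hpE h)
  exact ⟨p, hp, hpE, fun h => hcop (h.mul_right _), fun h => hcop (h.mul_left _)⟩

section Field

variable {K : Type*} [Field K] {B : K}

theorem eq_sq_of_rec {x z : ℕ → K} (hE : ∀ m, lamSeq B m ≠ 0) (hx0 : x 0 = 1) (hz0 : z 0 = 1)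
    (hx : ∀ m, x (m + 1) = z m) (hz : ∀ m, z (m + 1) = (B + z m) ^ 2 / x m) (m : ℕ) :
    z m = lamSeq B m ^ 2 := by
  suffices h : z m = lamSeq B m ^ 2 ∧ z (m + 1) = lamSeq B (m + 1) ^ 2 from h.1
  induction m with
  | zero => simp [hz0, hz, hx0]
  | succ m ih =>
    refine ⟨ih.2, ?_⟩
    rw [hz, hx, ih.1, ih.2, div_eq_iff (pow_ne_zero 2 (hE m)), add_comm B, ← add_two_mul]
    ring

theorem eq_mul_of_rec {x w : ℕ → K} (hE : ∀ m, lamSeq B m ≠ 0) (hx0 : x 0 = 1)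
    (hx : ∀ m, x (m + 1) = lamSeq B m ^ 2)
    (hw : ∀ m, w (m + 1) = w m * (B + lamSeq B m ^ 2) / x m) (m : ℕ) :
    w (m + 1) = w 0 * (lamSeq B (m + 1) * lamSeq B m) := by
  induction m with
  | zero => simp [hw, hx0]
  | succ m ih =>
    rw [hw, hx, ih, div_eq_iff (pow_ne_zero 2 (hE m)), add_comm B, ← add_two_mul]
    ring

end Field

end lamSeq

theorem sylvester_pos {y : ℕ → ℕ} (hy0 : y 0 = 2)
    (hy : ∀ m, 1 ≤ m → y m = 1 + ∏ i ∈ Finset.range m, y i) (m : ℕ) : 0 < y m := by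
  induction m using Nat.strong_induction_on with
  | _ m ih =>
    rcases m with _ | m
    · omega
    · rw [hy _ m.succ_pos]
      omega

theorem exists_int_eq_two_mul_sylvester_pred_div {y : ℕ → ℕ} (hy0 : y 0 = 2)
    (hy : ∀ m, 1 ≤ m → y m = 1 + ∏ i ∈ Finset.range m, y i) {j m : ℕ} (hjm : j < m) :
    ∃ c : ℤ, 2 ≤ c ∧ (c : ℚ) = 2 * ((y m : ℚ) - 1) / y j := by
  obtain ⟨q, hq⟩ := Finset.dvd_prod_of_mem y (Finset.mem_range.mpr hjm)
  have hprod : 0 < ∏ i ∈ Finset.range m, y i :=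
    Finset.prod_pos fun i _ => sylvester_pos hy0 hy i
  have hyj := sylvester_pos hy0 hy j
  have hq1 : 1 ≤ q := Nat.pos_of_ne_zero (by rintro rfl; simp_all)
  refine ⟨2 * q, by omega, ?_⟩
  rw [hy m (by omega), hq]
  push_cast
  field_simp
  ring

theorem qdvd_intCast_iff {d : ℕ} {z : ℤ} : QDvd d z ↔ (d : ℤ) ∣ z := by
  constructor
  · rintro ⟨c, hc⟩
    exact ⟨c, by exact_mod_cast hc⟩
  · rintro ⟨c, rfl⟩
    exact ⟨c, by push_cast; rfl⟩

theorem lambda_prime_divides_tail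
    (n a : ℕ) (hn : 4 ≤ n) (ha : a ≤ n - 2)
    (y : ℕ → ℕ)
    (hy0 : y 0 = 2)
    (hy : ∀ m, 1 ≤ m → y m = 1 + ∏ i ∈ Finset.range m, y i)
    (k : ℕ → ℕ)
    (hk : Set.BijOn k (Set.Icc 3 n) (Set.Iic (n - 2) \ {a}))
    (L : ℕ → ℕ → ℚ)
    (hL00 : L 0 0 = 1)
    (hL01 : L 0 1 = 2 * ((y (n - 1) : ℚ) - 1) / (y a : ℚ))
    (hL02 : L 0 2 = 1)
    (hL0i : ∀ i, 3 ≤ i → i ≤ n → L 0 i = 2 * ((y (n - 1) : ℚ) - 1) / (y (k i) : ℚ))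
    (hR0 : ∀ m, L (m + 1) 0 = L m 2)
    (hR1 : ∀ m, L (m + 1) 1 = L m 1)
    (hR2 : ∀ m, L (m + 1) 2 = (L m 1 + L m 2) ^ 2 / L m 0)
    (hRi : ∀ m i, 3 ≤ i → i ≤ n → L (m + 1) i = L m i * (L m 1 + L m 2) / L m 0)
    : ∀ m, 1 ≤ m → ∃ p : ℕ, p.Prime ∧
      ¬ QDvd p (L m 0) ∧ ¬ QDvd p (L m 1) ∧
      ∀ i, 2 ≤ i → i ≤ n → QDvd p (L m i) := by
  intro m hm
  obtain ⟨m, rfl⟩ : ∃ m', m = m' + 1 := ⟨m - 1, by omega⟩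
  have hcoef : ∀ j ≤ n - 2, ∃ c : ℤ, 2 ≤ c ∧ (c : ℚ) = 2 * ((y (n - 1) : ℚ) - 1) / y j :=
    fun j hj => exists_int_eq_two_mul_sylvester_pred_div hy0 hy (by omega)
  obtain ⟨B, hB, hBL⟩ := hcoef a ha
  have hL1 : ∀ m, L m 1 = B := fun m => by
    induction m with
    | zero => rw [hL01, hBL]
    | succ m ih => rw [hR1, ih]
  have hE : ∀ m, lamSeq (B : ℚ) m ≠ 0 := fun m =>
    (zero_lt_one.trans_le (lamSeq.one_le (by exact_mod_cast (by omega : 0 ≤ B)) m)).ne'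
  have hL2 : ∀ m, L m 2 = lamSeq (B : ℚ) m ^ 2 :=
    lamSeq.eq_sq_of_rec (x := (L · 0)) hE hL00 hL02 hR0 fun m => by rw [hR2, hL1]
  obtain ⟨p, hp, hpE, hpB, hpE'⟩ := lamSeq.exists_prime_dvd_succ (by omega : 0 < B) m
  refine ⟨p, hp, ?_, ?_, fun i hi2 hin => ?_⟩
  · rw [hR0, hL2, ← lamSeq.intCast, ← Int.cast_pow, qdvd_intCast_iff]
    exact fun h => hpE' (Int.Prime.dvd_pow' hp h)
  · rwa [hL1, qdvd_intCast_iff]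
  · rcases hi2.eq_or_lt with rfl | hi3
    · rw [hL2, ← lamSeq.intCast, ← Int.cast_pow, qdvd_intCast_iff]
      exact dvd_pow hpE two_ne_zero
    · obtain ⟨c, -, hc⟩ := hcoef (k i) (hk.mapsTo ⟨hi3, hin⟩).1
      rw [lamSeq.eq_mul_of_rec (x := (L · 0)) (w := (L · i)) hE hL00 (fun m => by rw [hR0, hL2])
          (fun m => by rw [hRi m i hi3 hin, hL1, hL2]) m, hL0i i hi3 hin, ← hc,
        ← lamSeq.intCast, ← lamSeq.intCast, ← Int.cast_mul, ← Int.cast_mul, qdvd_intCast_iff]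
      exact (hpE.mul_right _).mul_left _
end

section
/- For every m ≥ 2, there exists a prime p such that p does not divide λ_1^(m,a) and does not divide λ_2^(m,a), but p divides λ_0^(m,a) and p divides λ_i^(m,a) for all i with 3 ≤ i ≤ n. -/
def Pseq (b : ℤ) : ℕ → ℤ
  | 0 => 1
  | 1 => b + 1
  | (m+2) => (b+2) * Pseq b (m+1) - Pseq b m

@[simp] lemma Pseq_zero (b : ℤ) : Pseq b 0 = 1 := rfl
@[simp] lemma Pseq_one (b : ℤ) : Pseq b 1 = b + 1 := rfl
lemma Pseq_rec (b : ℤ) (m : ℕ) : Pseq b (m+2) = (b+2) * Pseq b (m+1) - Pseq b m := rfl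

lemma Pseq_pos_mono (b : ℤ) (hb : 1 ≤ b) :
    ∀ m, 1 ≤ Pseq b m ∧ Pseq b m ≤ Pseq b (m+1) := by
  intro m
  induction m with
  | zero => refine ⟨le_refl 1, ?_⟩; simp; linarith
  | succ m ih =>
    obtain ⟨h1, h2⟩ := ih
    have h3 : 1 ≤ Pseq b (m+1) := le_trans h1 h2
    refine ⟨h3, ?_⟩
    rw [Pseq_rec]
    nlinarith

lemma Pseq_pos (b : ℤ) (hb : 1 ≤ b) (m : ℕ) : 1 ≤ Pseq b m :=
  (Pseq_pos_mono b hb m).1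

lemma Pseq_two_le (b : ℤ) (hb : 1 ≤ b) (m : ℕ) : 2 ≤ Pseq b (m+1) := by
  induction m with
  | zero => simp; linarith
  | succ m ih => calc (2:ℤ) ≤ Pseq b (m+1) := ih
                  _ ≤ Pseq b (m+2) := (Pseq_pos_mono b hb (m+1)).2

lemma Pseq_qr (b : ℤ) : ∀ m, Pseq b (m+2) * Pseq b m = b + Pseq b (m+1) ^ 2 := by
  intro m
  induction m with
  | zero => rw [Pseq_rec]; simp; ring
  | succ m ih =>
    have h1 : Pseq b (m+2) = (b+2) * Pseq b (m+1) - Pseq b m := Pseq_rec b m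
    have h2 : Pseq b (m+3) = (b+2) * Pseq b (m+2) - Pseq b (m+1) := Pseq_rec b (m+1)
    show Pseq b (m+3) * Pseq b (m+1) = b + Pseq b (m+2) ^ 2
    linear_combination Pseq b (m+1) * h2 - Pseq b (m+2) * h1 + ih

lemma Pseq_cop (b : ℤ) (p : ℕ) (hp : p.Prime) (hpb : (p:ℤ) ∣ b) :
    ∀ m, ¬ (p:ℤ) ∣ Pseq b m := by
  have hpz : Prime (p:ℤ) := Nat.prime_iff_prime_int.mp hp
  have key : ∀ m, (¬ (p:ℤ) ∣ Pseq b m) ∧ (¬ (p:ℤ) ∣ Pseq b (m+1)) := by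
    intro m
    induction m with
    | zero =>
      constructor
      · simp only [Pseq_zero]; exact hpz.not_dvd_one
      · intro h
        have hb1 : (p:ℤ) ∣ b + 1 := by simpa using h
        have h1 : (p:ℤ) ∣ 1 := by
          have := dvd_sub hb1 hpb; simpa using this
        exact hpz.not_dvd_one h1
    | succ m ih =>
      refine ⟨ih.2, ?_⟩
      intro h
      have hq := Pseq_qr b m
      have h2 : (p:ℤ) ∣ Pseq b (m+1) ^ 2 := by
        have he : Pseq b (m+1) ^ 2 = Pseq b (m+2) * Pseq b m - b := by linarith [hq]
        rw [he]
        exact dvd_sub (h.mul_right _) hpb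
      exact ih.2 (hpz.dvd_of_dvd_pow h2)
  exact fun m => (key m).1

lemma QDvd_int (p : ℕ) (z : ℤ) : QDvd p ((z : ℚ)) ↔ (p:ℤ) ∣ z := by
  constructor
  · rintro ⟨c, hc⟩
    exact ⟨c, by exact_mod_cast hc⟩
  · rintro ⟨c, hc⟩
    exact ⟨c, by rw [hc]; push_cast; ring⟩

theorem lambda_prime_divides_zero_and_tail
    (n a : ℕ) (hn : 4 ≤ n) (ha : a ≤ n - 2)
    (y : ℕ → ℕ)
    (hy0 : y 0 = 2)
    (hy : ∀ m, 1 ≤ m → y m = 1 + ∏ i ∈ Finset.range m, y i)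
    (k : ℕ → ℕ)
    (hk : Set.BijOn k (Set.Icc 3 n) (Set.Iic (n - 2) \ {a}))
    (L : ℕ → ℕ → ℚ)
    (hL00 : L 0 0 = 1)
    (hL01 : L 0 1 = 2 * ((y (n - 1) : ℚ) - 1) / (y a : ℚ))
    (hL02 : L 0 2 = 1)
    (hL0i : ∀ i, 3 ≤ i → i ≤ n → L 0 i = 2 * ((y (n - 1) : ℚ) - 1) / (y (k i) : ℚ))
    (hR0 : ∀ m, L (m + 1) 0 = L m 2)
    (hR1 : ∀ m, L (m + 1) 1 = L m 1)
    (hR2 : ∀ m, L (m + 1) 2 = (L m 1 + L m 2) ^ 2 / L m 0)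
    (hRi : ∀ m i, 3 ≤ i → i ≤ n → L (m + 1) i = L m i * (L m 1 + L m 2) / L m 0)
    : ∀ m, 2 ≤ m → ∃ p : ℕ, p.Prime ∧
      ¬ QDvd p (L m 1) ∧ ¬ QDvd p (L m 2) ∧
      QDvd p (L m 0) ∧ ∀ i, 3 ≤ i → i ≤ n → QDvd p (L m i) := by
  -- basic facts about y
  have hy1 : ∀ i, 1 ≤ y i := by
    intro i
    rcases Nat.eq_zero_or_pos i with h | h
    · subst h; omega
    · rw [hy i h]; omega
  -- t = product of y over range (n-1)
  set t : ℕ := ∏ i ∈ Finset.range (n - 1), y i with ht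
  have htpos : 1 ≤ t := Finset.one_le_prod' (fun i _ => hy1 i)
  have hyn1 : y (n - 1) = 1 + t := hy (n - 1) (by omega)
  have hdvdt : ∀ j, j ≤ n - 2 → y j ∣ t := by
    intro j hj
    exact Finset.dvd_prod_of_mem y (Finset.mem_range.mpr (by omega))
  have hcastQ : (2 : ℚ) * ((y (n - 1) : ℚ) - 1) = (2 * t : ℕ) := by
    rw [hyn1]; push_cast; ring
  -- the rational 2t/y_j equals the natural number (2t)/(y j) for j ≤ n-2
  have hquot : ∀ j, j ≤ n - 2 →
      2 * ((y (n - 1) : ℚ) - 1) / (y j : ℚ) = ((2 * t / y j : ℕ) : ℚ) := by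
    intro j hj
    have hd : y j ∣ 2 * t := Dvd.dvd.mul_left (hdvdt j hj) 2
    have hne : (y j : ℚ) ≠ 0 := by
      have := hy1 j; positivity
    rw [hcastQ]
    exact (Nat.cast_div hd hne).symm
  -- b : the integer value of L m 1
  set bn : ℕ := 2 * t / y a with hbn
  set b : ℤ := (bn : ℤ) with hbz
  have hL01' : L 0 1 = ((b : ℤ) : ℚ) := by
    rw [hL01, hquot a ha, hbz, hbn, Int.cast_natCast]
  have hb1 : 1 ≤ b := by
    have hd : y a ∣ 2 * t := Dvd.dvd.mul_left (hdvdt a ha) 2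
    have : 1 ≤ bn := by
      rw [hbn]
      have h1 : y a ≤ 2 * t := le_trans (Nat.le_of_dvd htpos (hdvdt a ha)) (by omega)
      exact (Nat.one_le_div_iff (hy1 a)).mpr h1
    rw [hbz]; exact_mod_cast this
  -- c i : the integer value of L 0 i for 3 ≤ i ≤ n
  have hki : ∀ i, 3 ≤ i → i ≤ n → k i ≤ n - 2 := by
    intro i h3 hni
    have : k i ∈ Set.Iic (n - 2) \ {a} := hk.1 (Set.mem_Icc.mpr ⟨h3, hni⟩)
    exact this.1
  have hL0i' : ∀ i, 3 ≤ i → i ≤ n → L 0 i = ((2 * t / y (k i) : ℕ) : ℚ) := by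
    intro i h3 hni
    rw [hL0i i h3 hni, hquot (k i) (hki i h3 hni)]
  -- positivity of Pseq in ℚ
  have hPne : ∀ m, ((Pseq b m : ℤ) : ℚ) ≠ 0 := by
    intro m
    have := Pseq_pos b hb1 m
    have : (0:ℤ) < Pseq b m := by linarith
    exact_mod_cast ne_of_gt (by exact_mod_cast this : (0:ℚ) < ((Pseq b m : ℤ):ℚ))
  -- closed form for L
  have key : ∀ m, L m 0 = ((Pseq b (m-1) : ℤ) : ℚ) ^ 2 ∧ L m 1 = ((b:ℤ):ℚ) ∧
      L m 2 = ((Pseq b m : ℤ) : ℚ) ^ 2 ∧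
      ∀ i, 3 ≤ i → i ≤ n →
        L m i = ((2 * t / y (k i) : ℕ) : ℚ) * ((Pseq b (m-1) : ℤ):ℚ) * ((Pseq b m : ℤ):ℚ) := by
    intro m
    induction m with
    | zero =>
      refine ⟨by simpa using hL00, hL01', by simpa using hL02, ?_⟩
      intro i h3 hni
      simp [hL0i' i h3 hni]
    | succ m ih =>
      obtain ⟨ih0, ih1, ih2, ihi⟩ := ih
      have hm1 : m + 1 - 1 = m := by omega
      constructor
      · rw [hm1, hR0 m, ih2]
      refine ⟨by rw [hR1 m, ih1], ?_, ?_⟩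
      · rw [hR2 m, ih0, ih1, ih2]
        cases m with
        | zero => simp
        | succ j =>
          have hq := Pseq_qr b j
          have hqQ : ((b:ℤ):ℚ) + ((Pseq b (j+1) : ℤ):ℚ) ^ 2
              = ((Pseq b (j+2) : ℤ):ℚ) * ((Pseq b j : ℤ):ℚ) := by
            exact_mod_cast hq.symm
          have hj1 : j + 1 - 1 = j := by omega
          rw [hj1, hqQ]
          have hne := hPne j
          field_simp
      · intro i h3 hni
        rw [hm1, hRi m i h3 hni, ihi i h3 hni, ih0, ih1, ih2]
        cases m with
        | zero => simp
        | succ j =>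
          have hq := Pseq_qr b j
          have hqQ : ((b:ℤ):ℚ) + ((Pseq b (j+1) : ℤ):ℚ) ^ 2
              = ((Pseq b (j+2) : ℤ):ℚ) * ((Pseq b j : ℤ):ℚ) := by
            exact_mod_cast hq.symm
          have hj1 : j + 1 - 1 = j := by omega
          rw [hj1, hqQ]
          have hne := hPne j
          field_simp
  -- main conclusion
  intro m hm
  obtain ⟨j, rfl⟩ : ∃ j, m = j + 2 := ⟨m - 2, by omega⟩
  obtain ⟨hK0, hK1, hK2, hKi⟩ := key (j + 2)
  have hj1 : j + 2 - 1 = j + 1 := by omega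
  rw [hj1] at hK0 hKi
  -- get a prime factor of Pseq b (j+1)
  set N : ℕ := (Pseq b (j+1)).toNat with hN
  have hN2 : 2 ≤ N := by
    have := Pseq_two_le b hb1 j
    omega
  have hNcast : (N : ℤ) = Pseq b (j+1) := by
    have := Pseq_pos b hb1 (j+1)
    omega
  set p : ℕ := N.minFac with hp
  have hpp : p.Prime := Nat.minFac_prime (by omega)
  have hpP1 : (p:ℤ) ∣ Pseq b (j+1) := by
    rw [← hNcast]
    exact_mod_cast N.minFac_dvd
  have hpz : Prime (p:ℤ) := Nat.prime_iff_prime_int.mp hpp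
  -- p does not divide b
  have hpb : ¬ (p:ℤ) ∣ b := fun h => Pseq_cop b p hpp h (j+1) hpP1
  -- p does not divide Pseq b (j+2)
  have hpP2 : ¬ (p:ℤ) ∣ Pseq b (j+2) := by
    intro h
    apply hpb
    have hq := Pseq_qr b j
    have : b = Pseq b (j+2) * Pseq b j - Pseq b (j+1) ^ 2 := by linarith [hq]
    rw [this]
    exact dvd_sub (h.mul_right _) (dvd_pow hpP1 (by norm_num))
  refine ⟨p, hpp, ?_, ?_, ?_, ?_⟩
  · rw [hK1]
    rw [QDvd_int]
    exact hpb
  · rw [hK2]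
    have : ((Pseq b (j+2) : ℤ):ℚ) ^ 2 = (((Pseq b (j+2))^2 : ℤ) : ℚ) := by push_cast; ring
    rw [this, QDvd_int]
    intro h
    exact hpP2 (hpz.dvd_of_dvd_pow h)
  · rw [hK0]
    have : ((Pseq b (j+1) : ℤ):ℚ) ^ 2 = (((Pseq b (j+1))^2 : ℤ) : ℚ) := by push_cast; ring
    rw [this, QDvd_int]
    exact dvd_pow hpP1 (by norm_num)
  · intro i h3 hni
    rw [hKi i h3 hni]
    have : ((2 * t / y (k i) : ℕ) : ℚ) * ((Pseq b (j+1) : ℤ):ℚ) * ((Pseq b (j+2) : ℤ):ℚ)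
        = ((((2 * t / y (k i) : ℕ) : ℤ) * Pseq b (j+1) * Pseq b (j+2) : ℤ) : ℚ) := by
      rw [Int.cast_mul, Int.cast_mul, Int.cast_natCast]
    rw [this, QDvd_int]
    exact Dvd.dvd.mul_right (Dvd.dvd.mul_left hpP1 _) _
end

section
/- For each i ∈ {3,…,n} there exists an integer k > 1 such that for all m ≥ 0: k does not divide λ_0^(m,a), λ_2^(m,a), or λ_i^(m,a), but k divides λ_j^(m,a) for every j ∈ {1,…,n} \ {2,i} with j ≠ 0. -/
/-- Auxiliary linear-recurrence sequence. -/
def Urec (c : ℤ) : ℕ → ℤ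
  | 0 => 1
  | 1 => 1
  | m + 2 => c * Urec c (m + 1) - Urec c m

lemma Urec_pos (c : ℤ) (hc : 2 ≤ c) : ∀ m, 1 ≤ Urec c m ∧ Urec c m ≤ Urec c (m + 1) := by
  intro m
  induction m with
  | zero => simp [Urec]
  | succ m ih =>
    obtain ⟨h1, h2⟩ := ih
    have e : Urec c (m + 2) = c * Urec c (m + 1) - Urec c m := rfl
    constructor
    · linarith
    · rw [e]; nlinarith

lemma Urec_markov (c : ℤ) : ∀ m, Urec c (m + 2) * Urec c m = Urec c (m + 1) ^ 2 + (c - 2) := by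
  intro m
  induction m with
  | zero => show (c * 1 - 1) * 1 = 1 ^ 2 + (c - 2); ring
  | succ m ih =>
    have e1 : Urec c (m + 3) = c * Urec c (m + 2) - Urec c (m + 1) := rfl
    have e2 : Urec c (m + 2) = c * Urec c (m + 1) - Urec c m := rfl
    have : Urec c (m + 3) * Urec c (m + 1) = Urec c (m + 2) ^ 2 + (c - 2) := by
      linear_combination Urec c (m + 1) * e1 - Urec c (m + 2) * e2 + ih
    exact this

lemma Urec_mod (c K : ℤ) (h : K ∣ c - 2) : ∀ m, K ∣ (Urec c m - 1) := by
  have key : ∀ m, K ∣ (Urec c m - 1) ∧ K ∣ (Urec c (m + 1) - 1) := by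
    intro m
    induction m with
    | zero => simp [Urec]
    | succ m ih =>
      obtain ⟨h0, h1⟩ := ih
      refine ⟨h1, ?_⟩
      have e : Urec c (m + 2) - 1 =
          (c - 2) * Urec c (m + 1) + 2 * (Urec c (m + 1) - 1) - (Urec c m - 1) := by
        show c * Urec c (m + 1) - Urec c m - 1 = _; ring
      rw [e]
      exact dvd_sub (dvd_add (h.mul_right _) (h1.mul_left 2)) h0
  exact fun m => (key m).1

lemma qdvd_intCast (K : ℕ) (z : ℤ) : QDvd K (z : ℚ) ↔ (K : ℤ) ∣ z := by
  constructor
  · rintro ⟨c, hc⟩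
    exact ⟨c, by exact_mod_cast hc⟩
  · rintro ⟨c, hc⟩
    exact ⟨c, by rw [hc]; push_cast; ring⟩

theorem lambda_exists_k
    (n a : ℕ) (hn : 4 ≤ n) (ha : a ≤ n - 2)
    (y : ℕ → ℕ)
    (hy0 : y 0 = 2)
    (hy : ∀ m, 1 ≤ m → y m = 1 + ∏ i ∈ Finset.range m, y i)
    (k : ℕ → ℕ)
    (hk : Set.BijOn k (Set.Icc 3 n) (Set.Iic (n - 2) \ {a}))
    (L : ℕ → ℕ → ℚ)
    (hL00 : L 0 0 = 1)
    (hL01 : L 0 1 = 2 * ((y (n - 1) : ℚ) - 1) / (y a : ℚ))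
    (hL02 : L 0 2 = 1)
    (hL0i : ∀ i, 3 ≤ i → i ≤ n → L 0 i = 2 * ((y (n - 1) : ℚ) - 1) / (y (k i) : ℚ))
    (hR0 : ∀ m, L (m + 1) 0 = L m 2)
    (hR1 : ∀ m, L (m + 1) 1 = L m 1)
    (hR2 : ∀ m, L (m + 1) 2 = (L m 1 + L m 2) ^ 2 / L m 0)
    (hRi : ∀ m i, 3 ≤ i → i ≤ n → L (m + 1) i = L m i * (L m 1 + L m 2) / L m 0)
    : ∀ i, 3 ≤ i → i ≤ n → ∃ K : ℕ, 1 < K ∧ ∀ m,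
      ¬ QDvd K (L m 0) ∧ ¬ QDvd K (L m 2) ∧ ¬ QDvd K (L m i) ∧
      ∀ j, 1 ≤ j → j ≤ n → j ≠ 2 → j ≠ i → QDvd K (L m j) := by
  intro i hi3 hin
  -- basic facts about the Sylvester numbers
  have ypos : ∀ m, 0 < y m := by
    intro m
    match m with
    | 0 => rw [hy0]; norm_num
    | m + 1 => rw [hy (m + 1) (by omega)]; omega
  have y2 : ∀ m, 2 ≤ y m := by
    intro m
    match m with
    | 0 => rw [hy0]
    | m + 1 =>
      rw [hy (m + 1) (by omega)]
      have h1 : 1 ≤ ∏ i ∈ Finset.range (m + 1), y i :=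
        Finset.one_le_prod' (fun i _ => ypos i)
      omega
  have ydvd : ∀ b m, b < m → y b ∣ ∏ i ∈ Finset.range m, y i := by
    intro b m h
    exact Finset.dvd_prod_of_mem _ (Finset.mem_range.mpr h)
  have yodd : ∀ m, 1 ≤ m → ¬ (2 ∣ y m) := by
    intro m hm
    rw [hy m hm]
    have h2 : 2 ∣ ∏ i ∈ Finset.range m, y i := hy0 ▸ ydvd 0 m hm
    omega
  have ycop : ∀ b c, b ≠ c → Nat.Coprime (y b) (y c) := by
    have key : ∀ b c, b < c → Nat.Coprime (y b) (y c) := by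
      intro b c h
      rw [hy c (by omega)]
      obtain ⟨q, hq⟩ := ydvd b c h
      rw [hq]
      have h2 := (Nat.coprime_add_mul_right_right (y b) 1 q).mpr (Nat.coprime_one_right (y b))
      rwa [mul_comm q (y b)] at h2
    intro b c h
    rcases lt_trichotomy b c with h' | h' | h'
    · exact key b c h'
    · exact absurd h' h
    · exact (key c b h').symm
  -- the products with one factor removed
  set P : ℕ → ℕ := fun b => ∏ x ∈ (Finset.range (n - 1)).erase b, y x with hP
  have hL0val : ∀ b, b < n - 1 → 2 * ((y (n - 1) : ℚ) - 1) / (y b : ℚ) = ((2 * P b : ℕ) : ℚ) := by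
    intro b hb
    have hT : y (n - 1) = 1 + ∏ x ∈ Finset.range (n - 1), y x := hy (n - 1) (by omega)
    have hsplit : (∏ x ∈ Finset.range (n - 1), y x) = y b * P b :=
      (Finset.mul_prod_erase _ _ (Finset.mem_range.mpr hb)).symm
    have hyb : (y b : ℚ) ≠ 0 := Nat.cast_ne_zero.mpr (ypos b).ne'
    rw [hT, hsplit]
    push_cast
    field_simp
    ring
  -- facts about k i
  have hiIcc : i ∈ Set.Icc 3 n := Set.mem_Icc.mpr ⟨hi3, hin⟩
  have hkimem := hk.mapsTo hiIcc
  obtain ⟨hkile, hkine⟩ : k i ≤ n - 2 ∧ k i ≠ a := by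
    constructor
    · exact Set.mem_Iic.mp hkimem.1
    · exact hkimem.2
  -- choose K
  obtain ⟨K, hK1, hKdvd, hKnot⟩ :
      ∃ K : ℕ, 1 < K ∧ (∀ b, b < n - 1 → b ≠ k i → K ∣ 2 * P b) ∧ ¬ K ∣ 2 * P (k i) := by
    by_cases hki0 : k i = 0
    · refine ⟨4, by norm_num, ?_, ?_⟩
      · intro b hb hbne
        have h0mem : (0 : ℕ) ∈ (Finset.range (n - 1)).erase b := by
          rw [Finset.mem_erase, Finset.mem_range]
          exact ⟨fun h => hbne (h ▸ hki0.symm ▸ rfl), by omega⟩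
        have h2P : 2 ∣ P b := hy0 ▸ Finset.dvd_prod_of_mem _ h0mem
        obtain ⟨q, hq⟩ := h2P
        exact ⟨q, by rw [hq]; ring⟩
      · rw [hki0]
        rintro ⟨q, hq⟩
        have h2P : 2 ∣ P 0 := ⟨q, by omega⟩
        obtain ⟨x, hx, hdx⟩ := (Nat.prime_two.prime.dvd_finset_prod_iff y).mp h2P
        rw [Finset.mem_erase] at hx
        exact yodd x (by omega) hdx
    · refine ⟨y (k i), y2 (k i), ?_, ?_⟩
      · intro b hb hbne
        have hmem : k i ∈ (Finset.range (n - 1)).erase b := by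
          rw [Finset.mem_erase, Finset.mem_range]
          exact ⟨fun h => hbne h.symm, by omega⟩
        exact (Finset.dvd_prod_of_mem _ hmem).mul_left 2
      · intro hdvd
        have hcop : Nat.Coprime (y (k i)) (2 * P (k i)) := by
          refine Nat.Coprime.mul_right ?_ ?_
          · exact ((Nat.Prime.coprime_iff_not_dvd Nat.prime_two).mpr
              (yodd (k i) (by omega))).symm
          · refine Nat.Coprime.prod_right ?_
            intro x hx
            exact ycop (k i) x (fun h => (Finset.mem_erase.mp hx).1 h.symm)
        have := Nat.dvd_gcd dvd_rfl hdvd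
        rw [Nat.Coprime] at hcop
        rw [hcop] at this
        have := Nat.le_of_dvd one_pos this
        have := y2 (k i)
        omega
  -- K divides the constant λ₁ = 2 P a
  have hKa : K ∣ 2 * P a := hKdvd a (by omega) (fun h => hkine h.symm)
  -- the sequence U
  set q : ℕ := 2 * P a with hq
  set c : ℤ := (q : ℤ) + 2 with hc
  set U : ℕ → ℤ := Urec c with hU
  have hcK : (K : ℤ) ∣ c - 2 := by
    rw [hc]
    simpa using Int.natCast_dvd_natCast.mpr hKa
  have hUpos : ∀ m, 1 ≤ U m := fun m => (Urec_pos c (by rw [hc]; omega) m).1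
  have hUmod : ∀ m, (K : ℤ) ∣ (U m - 1) := Urec_mod c K hcK
  have hMark : ∀ m, U (m + 2) * U m = U (m + 1) ^ 2 + (q : ℤ) := by
    intro m
    have h := Urec_markov c m
    rw [show c - 2 = (q : ℤ) from by rw [hc]; ring] at h
    exact h
  have hUne : ∀ m, (U m : ℚ) ≠ 0 := by
    intro m
    have := hUpos m
    exact_mod_cast (by omega : (U m : ℤ) ≠ 0)
  -- closed form for L
  have hCF : ∀ m, L m 0 = ((U m : ℤ) : ℚ) ^ 2 ∧ L m 1 = ((q : ℤ) : ℚ) ∧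
      L m 2 = ((U (m + 1) : ℤ) : ℚ) ^ 2 ∧
      ∀ j, 3 ≤ j → j ≤ n → L m j = ((2 * P (k j) : ℕ) : ℚ) * (U (m + 1) : ℚ) * (U m : ℚ) := by
    intro m
    induction m with
    | zero =>
      have hU0 : U 0 = 1 := rfl
      have hU1 : U 1 = 1 := rfl
      refine ⟨by rw [hL00, hU0]; norm_num, ?_, by rw [hL02, hU1]; norm_num, ?_⟩
      · rw [hL01, hL0val a (by omega), hq]; push_cast; ring
      · intro j hj3 hjn
        have hjIcc : j ∈ Set.Icc 3 n := Set.mem_Icc.mpr ⟨hj3, hjn⟩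
        have hkj := hk.mapsTo hjIcc
        have hkjle : k j ≤ n - 2 := Set.mem_Iic.mp hkj.1
        rw [hL0i j hj3 hjn, hL0val (k j) (by omega), hU0, hU1]
        push_cast; ring
    | succ m ih =>
      obtain ⟨h0, h1, h2, hj⟩ := ih
      have key : ((q : ℤ) : ℚ) + ((U (m + 1) : ℤ) : ℚ) ^ 2 = (U (m + 2) : ℚ) * (U m : ℚ) := by
        have h' : ((U (m + 1) ^ 2 + (q : ℤ) : ℤ) : ℚ) = ((U (m + 2) * U m : ℤ) : ℚ) := by
          exact_mod_cast (hMark m).symm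
        push_cast at h'
        linear_combination h'
      refine ⟨by rw [hR0 m, h2], by rw [hR1 m, h1], ?_, ?_⟩
      · rw [hR2 m, h0, h1, h2, key]
        rw [mul_pow, mul_div_assoc, div_self (pow_ne_zero 2 (hUne m)), mul_one]
      · intro j hj3 hjn
        rw [hRi m j hj3 hjn, hj j hj3 hjn, h0, h1, h2, key,
          div_eq_iff (pow_ne_zero 2 (hUne m))]
        ring
  -- conclude
  refine ⟨K, hK1, ?_⟩
  intro m
  obtain ⟨h0, h1, h2, hj⟩ := hCF m
  have hKint : (1 : ℤ) < (K : ℤ) := by exact_mod_cast hK1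
  -- K does not divide a square of something ≡ 1 mod K
  have hnotsq : ∀ s, ¬ QDvd K (((U s : ℤ) : ℚ) ^ 2) := by
    intro s hdvd
    have : QDvd K ((((U s) ^ 2 : ℤ) : ℚ)) := by push_cast; exact hdvd
    rw [qdvd_intCast] at this
    have hd1 : (K : ℤ) ∣ (U s) ^ 2 - 1 := by
      have : (U s) ^ 2 - 1 = (U s - 1) * (U s + 1) := by ring
      rw [this]
      exact (hUmod s).mul_right _
    have : (K : ℤ) ∣ 1 := by
      have := dvd_sub this hd1
      simpa using this
    have := Int.le_of_dvd one_pos this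
    omega
  have hnotprod : ∀ s t (w : ℕ), ¬ K ∣ w → ¬ QDvd K ((w : ℚ) * (U s : ℚ) * (U t : ℚ)) := by
    intro s t w hw hdvd
    have hcast : ((w : ℚ) * (U s : ℚ) * (U t : ℚ)) = (((w : ℤ) * U s * U t : ℤ) : ℚ) := by
      push_cast; ring
    rw [hcast, qdvd_intCast] at hdvd
    have hd1 : (K : ℤ) ∣ (w : ℤ) * U s * U t - (w : ℤ) := by
      have e : (w : ℤ) * U s * U t - (w : ℤ) =
          (w : ℤ) * U s * (U t - 1) + (w : ℤ) * (U s - 1) := by ring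
      rw [e]
      exact dvd_add ((hUmod t).mul_left _) ((hUmod s).mul_left _)
    have : (K : ℤ) ∣ (w : ℤ) := by
      have := dvd_sub hdvd hd1
      simpa using this
    exact hw (Int.natCast_dvd_natCast.mp this)
  refine ⟨by rw [h0]; exact hnotsq m, by rw [h2]; exact hnotsq (m + 1), ?_, ?_⟩
  · rw [hj i hi3 hin]
    exact hnotprod (m + 1) m (2 * P (k i)) hKnot
  · intro j hj1 hjn hj2 hji
    rcases Nat.lt_or_ge j 3 with hlt | hge
    · -- j = 1
      have : j = 1 := by omega
      subst this
      rw [h1, qdvd_intCast]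
      exact_mod_cast Int.natCast_dvd_natCast.mpr hKa
    · -- j ≥ 3
      have hjIcc : j ∈ Set.Icc 3 n := Set.mem_Icc.mpr ⟨hge, hjn⟩
      have hkj := hk.mapsTo hjIcc
      have hkjle : k j ≤ n - 2 := Set.mem_Iic.mp hkj.1
      have hkjne : k j ≠ k i := fun h => hji (hk.injOn hjIcc hiIcc h)
      have hKj : K ∣ 2 * P (k j) := hKdvd (k j) (by omega) hkjne
      rw [hj j hge hjn]
      have hcast : (((2 * P (k j) : ℕ) : ℚ) * (U (m + 1) : ℚ) * (U m : ℚ)) =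
          ((((2 * P (k j) : ℕ) : ℤ) * U (m + 1) * U m : ℤ) : ℚ) := by push_cast; ring
      rw [hcast, qdvd_intCast]
      exact ((Int.natCast_dvd_natCast.mpr hKj).mul_right _).mul_right _
end

section
/- There exists a prime p such that for all m ≥ 0, p divides λ_1^(m,a) but p does not divide λ_0^(m,a) + λ_2^(m,a). -/
/-- Auxiliary integer sequence: `cseq t m` will equal `λ₀^(m)`. -/
def cseq (t : ℤ) : ℕ → ℤ
  | 0 => 1
  | 1 => 1
  | (m + 2) => (t ^ 2 + 4 * t + 2) * cseq t (m + 1) - cseq t m - 2 * t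

lemma cseq_quad (t : ℤ) : ∀ m, cseq t (m + 2) * cseq t m = (t + cseq t (m + 1)) ^ 2 := by
  intro m
  induction m with
  | zero => simp [cseq]; ring
  | succ m ih =>
    have h2 : cseq t (m + 2) = (t ^ 2 + 4 * t + 2) * cseq t (m + 1) - cseq t m - 2 * t := rfl
    have h3 : cseq t (m + 3) = (t ^ 2 + 4 * t + 2) * cseq t (m + 2) - cseq t (m + 1) - 2 * t := rfl
    rw [h3]
    rw [h2] at ih ⊢
    linear_combination ih

lemma cseq_pos (t : ℤ) (ht : 0 ≤ t) : ∀ m, 0 < cseq t m := by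
  have key : ∀ m, 0 < cseq t m ∧ 0 < cseq t (m + 1) := by
    intro m
    induction m with
    | zero => exact ⟨by norm_num [cseq], by norm_num [cseq]⟩
    | succ m ih =>
      obtain ⟨h0, h1⟩ := ih
      refine ⟨h1, ?_⟩
      have hq := cseq_quad t m
      have hsq : 0 < (t + cseq t (m + 1)) ^ 2 := by positivity
      nlinarith
  exact fun m => (key m).1

lemma cseq_one (p : ℕ) (t : ℤ) (ht : (t : ZMod p) = 0) :
    ∀ m, ((cseq t m : ℤ) : ZMod p) = 1 := by
  have key : ∀ m, ((cseq t m : ℤ) : ZMod p) = 1 ∧ ((cseq t (m + 1) : ℤ) : ZMod p) = 1 := by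
    intro m
    induction m with
    | zero => exact ⟨by norm_num [cseq], by norm_num [cseq]⟩
    | succ m ih =>
      obtain ⟨h0, h1⟩ := ih
      refine ⟨h1, ?_⟩
      have h2 : cseq t (m + 2) = (t ^ 2 + 4 * t + 2) * cseq t (m + 1) - cseq t m - 2 * t := rfl
      rw [h2]
      push_cast
      rw [h0, h1, ht]
      ring
  exact fun m => (key m).1

theorem lambda_exists_prime_dividing_lambda_one
    (n a : ℕ) (hn : 4 ≤ n) (ha : a ≤ n - 2)
    (y : ℕ → ℕ)
    (hy0 : y 0 = 2)
    (hy : ∀ m, 1 ≤ m → y m = 1 + ∏ i ∈ Finset.range m, y i)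
    (k : ℕ → ℕ)
    (hk : Set.BijOn k (Set.Icc 3 n) (Set.Iic (n - 2) \ {a}))
    (L : ℕ → ℕ → ℚ)
    (hL00 : L 0 0 = 1)
    (hL01 : L 0 1 = 2 * ((y (n - 1) : ℚ) - 1) / (y a : ℚ))
    (hL02 : L 0 2 = 1)
    (hL0i : ∀ i, 3 ≤ i → i ≤ n → L 0 i = 2 * ((y (n - 1) : ℚ) - 1) / (y (k i) : ℚ))
    (hR0 : ∀ m, L (m + 1) 0 = L m 2)
    (hR1 : ∀ m, L (m + 1) 1 = L m 1)
    (hR2 : ∀ m, L (m + 1) 2 = (L m 1 + L m 2) ^ 2 / L m 0)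
    (hRi : ∀ m i, 3 ≤ i → i ≤ n → L (m + 1) i = L m i * (L m 1 + L m 2) / L m 0)
    : ∃ p : ℕ, p.Prime ∧ ∀ m,
      QDvd p (L m 1) ∧ ¬ QDvd p (L m 0 + L m 2) := by
  -- positivity of the Sylvester numbers
  have hy_pos : ∀ i, 1 ≤ y i := by
    intro i
    rcases Nat.eq_zero_or_pos i with h | h
    · simp [h, hy0]
    · rw [hy i h]; omega
  -- the element to extract: j ∈ {1, 2}, j ≠ a
  set j : ℕ := if a = 1 then 2 else 1 with hj
  have hj1 : 1 ≤ j := by rw [hj]; split <;> norm_num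
  have hja : j ≠ a := by rw [hj]; split <;> omega
  have hjn : j < n - 1 := by rw [hj]; split <;> omega
  -- y j is odd and at least 3
  have hyj := hy j hj1
  have h2dvd : 2 ∣ ∏ i ∈ Finset.range j, y i := by
    have h0mem : (0 : ℕ) ∈ Finset.range j := Finset.mem_range.mpr hj1
    have := Finset.dvd_prod_of_mem y h0mem
    rwa [hy0] at this
  have hprodpos : 1 ≤ ∏ i ∈ Finset.range j, y i :=
    Finset.one_le_prod' (fun i _ => hy_pos i)
  have hyj_odd : ¬ 2 ∣ y j := by
    obtain ⟨e, he⟩ := h2dvd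
    rw [hyj, he]; omega
  have hyj_ge : 3 ≤ y j := by
    obtain ⟨e, he⟩ := h2dvd
    rw [hyj, he]; omega
  -- the prime p
  set p : ℕ := (y j).minFac with hp
  have hp_prime : p.Prime := Nat.minFac_prime (by omega)
  have hp_dvd_yj : p ∣ y j := Nat.minFac_dvd _
  have hp_ne_two : p ≠ 2 := by
    intro h
    exact hyj_odd (h ▸ hp_dvd_yj)
  -- the integer value T of L m 1
  set T : ℕ := 2 * ∏ i ∈ (Finset.range (n - 1)).erase a, y i with hT
  have ha_mem : a ∈ Finset.range (n - 1) := Finset.mem_range.mpr (by omega)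
  have hprod_split : y a * ∏ i ∈ (Finset.range (n - 1)).erase a, y i
      = ∏ i ∈ Finset.range (n - 1), y i := Finset.mul_prod_erase _ y ha_mem
  have hyn1 := hy (n - 1) (by omega)
  -- p divides T
  have hjmem : j ∈ (Finset.range (n - 1)).erase a :=
    Finset.mem_erase.mpr ⟨hja, Finset.mem_range.mpr hjn⟩
  have hp_dvd_T : p ∣ T := by
    refine dvd_mul_of_dvd_right (hp_dvd_yj.trans ?_) 2
    exact Finset.dvd_prod_of_mem y hjmem
  -- L 0 1 = T
  have hya_ne : (y a : ℚ) ≠ 0 := by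
    have := hy_pos a; positivity
  have hL01T : L 0 1 = (T : ℚ) := by
    rw [hL01, hyn1, hT]
    push_cast [← hprod_split]
    field_simp
    ring
  have hLm1 : ∀ m, L m 1 = (T : ℚ) := by
    intro m
    induction m with
    | zero => exact hL01T
    | succ m ih => rw [hR1, ih]
  -- the invariant for L m 0 and L m 2
  have htnn : (0 : ℤ) ≤ (T : ℤ) := Int.ofNat_nonneg T
  have key : ∀ m, L m 0 = ((cseq (T : ℤ) m : ℤ) : ℚ) ∧
      L m 2 = ((cseq (T : ℤ) (m + 1) : ℤ) : ℚ) := by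
    intro m
    induction m with
    | zero =>
      constructor
      · rw [hL00]; norm_num [cseq]
      · rw [hL02]; norm_num [cseq]
    | succ m ih =>
      obtain ⟨h0, h2⟩ := ih
      have hcm_pos := cseq_pos (T : ℤ) htnn m
      have hcm_ne : ((cseq (T : ℤ) m : ℤ) : ℚ) ≠ 0 := by
        exact_mod_cast hcm_pos.ne'
      constructor
      · rw [hR0, h2]
      · rw [hR2, hLm1, h0, h2, div_eq_iff hcm_ne]
        have hq := cseq_quad (T : ℤ) m
        have hqQ : ((cseq (T:ℤ) (m+2) : ℤ) : ℚ) * ((cseq (T:ℤ) m : ℤ) : ℚ)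
            = (((T:ℤ) : ℚ) + ((cseq (T:ℤ) (m+1) : ℤ) : ℚ)) ^ 2 := by
          exact_mod_cast congrArg (fun z : ℤ => (z : ℚ)) hq
        push_cast at hqQ ⊢
        linarith [hqQ]
  refine ⟨p, hp_prime, fun m => ⟨?_, ?_⟩⟩
  · -- p divides L m 1
    obtain ⟨c, hc⟩ := hp_dvd_T
    exact ⟨(c : ℤ), by rw [hLm1 m, hc]; push_cast; ring⟩
  · -- p does not divide L m 0 + L m 2
    rintro ⟨c, hc⟩
    obtain ⟨h0, h2⟩ := key m
    rw [h0, h2] at hc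
    have hcZ : cseq (T : ℤ) m + cseq (T : ℤ) (m + 1) = (p : ℤ) * c := by
      exact_mod_cast hc
    -- pass to ZMod p
    have htz : ((T : ℤ) : ZMod p) = 0 := by
      obtain ⟨c', hc'⟩ := hp_dvd_T
      rw [hc']; push_cast; simp
    have hmod := congrArg (fun z : ℤ => (z : ZMod p)) hcZ
    simp only [Int.cast_add, Int.cast_mul, Int.cast_natCast] at hmod
    rw [cseq_one p (T : ℤ) htz m, cseq_one p (T : ℤ) htz (m + 1)] at hmod
    rw [ZMod.natCast_self, zero_mul] at hmod
    have h2z : ((2 : ℕ) : ZMod p) = 0 := by push_cast; linear_combination hmod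
    have : p ∣ 2 := by
      haveI : NeZero p := ⟨hp_prime.ne_zero⟩
      exact (ZMod.natCast_eq_zero_iff 2 p).mp h2z
    exact hp_ne_two ((Nat.prime_dvd_prime_iff_eq hp_prime Nat.prime_two).mp this)
end

section
/- Let h^(m,a) = λ_0^(m,a) + λ_1^(m,a) + … + λ_n^(m,a). Then h^(0,a) = 2·t_{n-1}, and for m ≥ 1, h^(m,a) = (λ_1^(m-1,a)+λ_2^(m-1,a))·h^(m-1,a)/λ_0^(m-1,a). Moreover, for every i ∈ {3,…,n} and every m ≥ 0, h^(m,a) = y_{k_i}·λ_i^(m,a). -/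
theorem lambda_height_formulas
    (n a : ℕ) (hn : 4 ≤ n) (ha : a ≤ n - 2)
    (y : ℕ → ℕ)
    (hy0 : y 0 = 2)
    (hy : ∀ m, 1 ≤ m → y m = 1 + ∏ i ∈ Finset.range m, y i)
    (k : ℕ → ℕ)
    (hk : Set.BijOn k (Set.Icc 3 n) (Set.Iic (n - 2) \ {a}))
    (L : ℕ → ℕ → ℚ)
    (hL00 : L 0 0 = 1)
    (hL01 : L 0 1 = 2 * ((y (n - 1) : ℚ) - 1) / (y a : ℚ))
    (hL02 : L 0 2 = 1)
    (hL0i : ∀ i, 3 ≤ i → i ≤ n → L 0 i = 2 * ((y (n - 1) : ℚ) - 1) / (y (k i) : ℚ))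
    (hR0 : ∀ m, L (m + 1) 0 = L m 2)
    (hR1 : ∀ m, L (m + 1) 1 = L m 1)
    (hR2 : ∀ m, L (m + 1) 2 = (L m 1 + L m 2) ^ 2 / L m 0)
    (hRi : ∀ m i, 3 ≤ i → i ≤ n → L (m + 1) i = L m i * (L m 1 + L m 2) / L m 0)
    : (∑ i ∈ Finset.range (n + 1), L 0 i = 2 * ((y (n - 1) : ℚ) - 1)) ∧
      (∀ m, ∑ i ∈ Finset.range (n + 1), L (m + 1) i =
        (L m 1 + L m 2) * (∑ i ∈ Finset.range (n + 1), L m i) / L m 0) ∧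
      (∀ m i, 3 ≤ i → i ≤ n →
        ∑ j ∈ Finset.range (n + 1), L m j = (y (k i) : ℚ) * L m i) := by
  -- All Sylvester numbers are at least 2
  have hy2 : ∀ m, 2 ≤ y m := by
    intro m
    induction m using Nat.strong_induction_on with
    | _ m ih =>
      match m with
      | 0 => omega
      | m + 1 =>
        rw [hy (m + 1) (by omega)]
        have h1 : 1 ≤ ∏ i ∈ Finset.range (m + 1), y i :=
          Finset.one_le_prod' fun i hi => by
            have := ih i (Finset.mem_range.mp hi); omega
        omega
  have ypos : ∀ b, (0 : ℚ) < (y b : ℚ) := fun b => by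
    have := hy2 b; exact_mod_cast (by omega : 0 < y b)
  have Ppos : ∀ N, (0 : ℚ) < ∏ i ∈ Finset.range N, (y i : ℚ) :=
    fun N => Finset.prod_pos fun i _ => ypos i
  -- y N = 1 + product, cast to ℚ
  have hyQ : ∀ N, (y N : ℚ) = 1 + ∏ i ∈ Finset.range N, (y i : ℚ) := by
    intro N
    match N with
    | 0 => norm_num [hy0]
    | N + 1 =>
      rw [hy (N + 1) (by omega)]
      push_cast
      ring
  -- telescoping sum
  have tel : ∀ N, ∑ i ∈ Finset.range N, (1 : ℚ) / (y i : ℚ)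
      = 1 - 1 / (∏ i ∈ Finset.range N, (y i : ℚ)) := by
    intro N
    induction N with
    | zero => simp
    | succ N ihN =>
      rw [Finset.sum_range_succ, Finset.prod_range_succ, ihN]
      have hP := Ppos N
      have hyN := hyQ N
      have hyne : (y N : ℚ) ≠ 0 := ne_of_gt (ypos N)
      field_simp
      rw [hyN]
      ring
  set t : ℚ := (y (n - 1) : ℚ) - 1 with htdef
  have ht : t = ∏ i ∈ Finset.range (n - 1), (y i : ℚ) := by
    rw [htdef, hyQ (n - 1)]; ring
  have ht_pos : 0 < t := by rw [ht]; exact Ppos _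
  have htne : t ≠ 0 := ne_of_gt ht_pos
  -- sum over the bijection
  have hbij : ∀ f : ℕ → ℚ,
      ∑ i ∈ Finset.Icc 3 n, f (k i) = ∑ b ∈ Finset.Iic (n - 2) \ {a}, f b := by
    intro f
    refine Finset.sum_nbij k ?_ ?_ ?_ (fun _ _ => rfl)
    · intro x hx
      have hx' : x ∈ Set.Icc 3 n := by
        simpa using hx
      have := hk.mapsTo hx'
      simpa using this
    · intro x hx x' hx' hxx
      exact hk.injOn (by simpa using hx) (by simpa using hx') hxx
    · intro b hb
      have hb' : b ∈ Set.Iic (n - 2) \ {a} := by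
        simpa using hb
      obtain ⟨x, hx, hxb⟩ := hk.surjOn hb'
      exact ⟨x, by simpa using hx, hxb⟩
  -- splitting the sum
  have hsplit : ∀ m, ∑ i ∈ Finset.range (n + 1), L m i
      = L m 0 + L m 1 + L m 2 + ∑ i ∈ Finset.Icc 3 n, L m i := by
    intro m
    rw [Finset.range_eq_Ico,
      ← Finset.sum_Ico_consecutive _ (by omega : 0 ≤ 3) (by omega : 3 ≤ n + 1)]
    have h1 : Finset.Ico 3 (n + 1) = Finset.Icc 3 n := Finset.Ico_add_one_right_eq_Icc 3 n
    have h2 : ∑ i ∈ Finset.Ico 0 3, L m i = L m 0 + L m 1 + L m 2 := by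
      rw [← Finset.range_eq_Ico]
      simp [Finset.sum_range_succ]
    rw [h1, h2]
  have hIic : Finset.Iic (n - 2) = Finset.range (n - 1) := by
    ext x; simp only [Finset.mem_Iic, Finset.mem_range]; omega
  -- base case of the sum
  have hbase : ∑ i ∈ Finset.range (n + 1), L 0 i = 2 * t := by
    rw [hsplit 0, hL00, hL01, hL02]
    have h3 : ∑ i ∈ Finset.Icc 3 n, L 0 i
        = ∑ i ∈ Finset.Icc 3 n, (fun b => 2 * t / (y b : ℚ)) (k i) :=
      Finset.sum_congr rfl fun i hi => by
        obtain ⟨h1, h2⟩ := Finset.mem_Icc.mp hi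
        exact hL0i i h1 h2
    rw [h3, hbij (fun b => 2 * t / (y b : ℚ))]
    have hsub : {a} ⊆ Finset.Iic (n - 2) := by
      simp [Finset.singleton_subset_iff, ha]
    rw [Finset.sum_sdiff_eq_sub hsub, Finset.sum_singleton]
    have hsum : ∑ b ∈ Finset.Iic (n - 2), 2 * t / (y b : ℚ) = 2 * t * (1 - 1 / t) := by
      rw [hIic]
      have : ∀ b, 2 * t / (y b : ℚ) = 2 * t * (1 / (y b : ℚ)) := fun b => by ring
      simp_rw [this]
      rw [← Finset.mul_sum, tel (n - 1), ← ht]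
    rw [hsum]
    have hane : (y a : ℚ) ≠ 0 := ne_of_gt (ypos a)
    field_simp
    ring
  -- positivity
  have hpos : ∀ m i, i ≤ n → 0 < L m i := by
    intro m
    induction m with
    | zero =>
      intro i hi
      match i with
      | 0 => rw [hL00]; norm_num
      | 1 => rw [hL01]; exact div_pos (by linarith) (ypos a)
      | 2 => rw [hL02]; norm_num
      | (j + 3) =>
        rw [hL0i (j + 3) (by omega) hi]
        exact div_pos (by linarith) (ypos _)
    | succ m ih =>
      intro i hi
      match i with
      | 0 => rw [hR0]; exact ih 2 (by omega)
      | 1 => rw [hR1]; exact ih 1 (by omega)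
      | 2 =>
        rw [hR2]
        exact div_pos (pow_pos (add_pos (ih 1 (by omega)) (ih 2 (by omega))) 2)
          (ih 0 (by omega))
      | (j + 3) =>
        rw [hRi m (j + 3) (by omega) hi]
        exact div_pos (mul_pos (ih _ hi) (add_pos (ih 1 (by omega)) (ih 2 (by omega))))
          (ih 0 (by omega))
  -- part 2
  have part2 : ∀ m, ∑ i ∈ Finset.range (n + 1), L (m + 1) i
      = (L m 1 + L m 2) * (∑ i ∈ Finset.range (n + 1), L m i) / L m 0 := by
    intro m
    have h0 : L m 0 ≠ 0 := ne_of_gt (hpos m 0 (by omega))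
    rw [hsplit (m + 1), hsplit m, hR0, hR1, hR2]
    have h3 : ∑ i ∈ Finset.Icc 3 n, L (m + 1) i
        = (∑ i ∈ Finset.Icc 3 n, L m i) * (L m 1 + L m 2) / L m 0 := by
      rw [Finset.sum_mul, Finset.sum_div]
      exact Finset.sum_congr rfl fun i hi => by
        obtain ⟨h1, h2⟩ := Finset.mem_Icc.mp hi
        exact hRi m i h1 h2
    rw [h3]
    field_simp
    ring
  refine ⟨hbase, part2, ?_⟩
  intro m
  induction m with
  | zero =>
    intro i h3 hni
    rw [hbase, hL0i i h3 hni]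
    rw [mul_div_cancel₀ _ (ne_of_gt (ypos (k i)))]
  | succ m ihm =>
    intro i h3 hni
    rw [part2 m, ihm i h3 hni, hRi m i h3 hni]
    ring
end

section
/- For every m ≥ 1, λ_0^(m,a)·λ_1^(m,a)/h^(m,a) < 1/(2·t_{n-1}), where h^(m,a) is the sum of the λ_i^(m,a) for i = 0,…,n. -/
/-!
Along the recursion the height satisfies `h^(m+1) = (λ₁ + λ₂) / λ₀ · h^(m)`, so the ratio
`λ₀ λ₁ / h` is multiplied by `λ₂ / (λ₁ + λ₂) < 1` at every step and is strictly decreasing.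
Sylvester's identity `∑_{j < n-1} 1 / y_j = 1 - 1 / t_{n-1}` makes the initial height exactly
`2 t_{n-1}`, so after the first step the ratio is `λ₁ / (λ₁ + 1) · 1 / (2 t_{n-1}) < 1 / (2 t_{n-1})`
with `λ₁ = 2 t_{n-1} / y_a`.
-/

structure IsSylvesterSeq (y : ℕ → ℕ) : Prop where
  zero : y 0 = 2
  succ : ∀ m, 1 ≤ m → y m = 1 + ∏ i ∈ Finset.range m, y i

namespace IsSylvesterSeq

variable {y : ℕ → ℕ}

theorem pos (hy : IsSylvesterSeq y) (m : ℕ) : 0 < y m := by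
  rcases m with _ | m
  · rw [hy.zero]; norm_num
  · rw [hy.succ _ m.succ_pos]
    omega

theorem prod_range (hy : IsSylvesterSeq y) (m : ℕ) :
    ∏ i ∈ Finset.range m, (y i : ℚ) = y m - 1 := by
  rcases m with _ | m
  · rw [Finset.prod_range_zero, hy.zero]; norm_num
  · rw [hy.succ _ m.succ_pos]
    push_cast
    ring

theorem sub_one_pos (hy : IsSylvesterSeq y) (m : ℕ) : 0 < (y m : ℚ) - 1 := by
  rw [← hy.prod_range]
  exact Finset.prod_pos fun i _ => by exact_mod_cast hy.pos i

theorem sum_range_inv (hy : IsSylvesterSeq y) (m : ℕ) :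
    ∑ i ∈ Finset.range m, 1 / (y i : ℚ) = 1 - 1 / ((y m : ℚ) - 1) := by
  induction m with
  | zero => rw [Finset.sum_range_zero, hy.zero]; norm_num
  | succ m ih =>
    have hy_ne : (y m : ℚ) ≠ 0 := by exact_mod_cast (hy.pos m).ne'
    have ht_ne := (hy.sub_one_pos m).ne'
    rw [Finset.sum_range_succ, ih, ← hy.prod_range (m + 1), Finset.prod_range_succ, hy.prod_range]
    field_simp
    ring

end IsSylvesterSeq

def height (n : ℕ) (L : ℕ → ℕ → ℚ) (m : ℕ) : ℚ :=
  ∑ i ∈ Finset.range (n + 1), L m i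

theorem height_eq {n : ℕ} (hn : 2 ≤ n) (L : ℕ → ℕ → ℚ) (m : ℕ) :
    height n L m = L m 0 + L m 1 + L m 2 + ∑ i ∈ Finset.Icc 3 n, L m i := by
  rw [height, Finset.range_eq_Ico, ← Finset.sum_Ico_consecutive _ (Nat.zero_le 3) (by omega),
    ← Finset.range_eq_Ico, Finset.Ico_add_one_right_eq_Icc]
  simp only [Finset.sum_range_succ, Finset.sum_range_zero, zero_add]

theorem height_pos {n : ℕ} {L : ℕ → ℕ → ℚ} {m : ℕ} (hpos : ∀ i ≤ n, 0 < L m i) :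
    0 < height n L m :=
  Finset.sum_pos (fun i hi => hpos i (Nat.lt_succ_iff.mp (Finset.mem_range.mp hi))) ⟨0, by simp⟩

theorem height_zero_eq {n a : ℕ} (hn : 2 ≤ n) (ha : a ≤ n - 2) {y : ℕ → ℕ}
    (hy : IsSylvesterSeq y) {k : ℕ → ℕ}
    (hk : Set.BijOn k (Set.Icc 3 n) (Set.Iic (n - 2) \ {a})) {L : ℕ → ℕ → ℚ}
    (hL00 : L 0 0 = 1) (hL01 : L 0 1 = 2 * ((y (n - 1) : ℚ) - 1) / (y a : ℚ)) (hL02 : L 0 2 = 1)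
    (hL0i : ∀ i, 3 ≤ i → i ≤ n → L 0 i = 2 * ((y (n - 1) : ℚ) - 1) / (y (k i) : ℚ)) :
    height n L 0 = 2 * ((y (n - 1) : ℚ) - 1) := by
  have hIic : Finset.Iic (n - 2) = Finset.range (n - 1) := by
    ext j; simp only [Finset.mem_Iic, Finset.mem_range]; omega
  have hya : (y a : ℚ) ≠ 0 := by exact_mod_cast (hy.pos a).ne'
  have ht := (hy.sub_one_pos (n - 1)).ne'
  rw [← Finset.coe_Icc, ← Finset.coe_Iic, ← Finset.coe_erase] at hk
  have hrecip : ∑ i ∈ Finset.Icc 3 n, 1 / (y (k i) : ℚ)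
      = 1 - 1 / ((y (n - 1) : ℚ) - 1) - 1 / (y a : ℚ) := by
    rw [Finset.sum_nbij (g := fun j => 1 / (y j : ℚ)) k (fun i hi => hk.mapsTo hi) hk.injOn
      hk.surjOn fun _ _ => rfl, Finset.sum_erase_eq_sub (Finset.mem_Iic.mpr ha), hIic,
      hy.sum_range_inv]
  have hrest : ∑ i ∈ Finset.Icc 3 n, L 0 i
      = 2 * ((y (n - 1) : ℚ) - 1) * ∑ i ∈ Finset.Icc 3 n, 1 / (y (k i) : ℚ) := by
    rw [Finset.mul_sum]
    refine Finset.sum_congr rfl fun i hi => ?_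
    rw [Finset.mem_Icc] at hi
    rw [hL0i i hi.1 hi.2]
    ring
  rw [height_eq hn, hL00, hL01, hL02, hrest, hrecip]
  field_simp
  ring

structure LambdaRecursion (n : ℕ) (L : ℕ → ℕ → ℚ) : Prop where
  zero : ∀ m, L (m + 1) 0 = L m 2
  one : ∀ m, L (m + 1) 1 = L m 1
  two : ∀ m, L (m + 1) 2 = (L m 1 + L m 2) ^ 2 / L m 0
  of_three_le : ∀ m i, 3 ≤ i → i ≤ n → L (m + 1) i = L m i * (L m 1 + L m 2) / L m 0

namespace LambdaRecursion

variable {n : ℕ} {L : ℕ → ℕ → ℚ}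

theorem pos (hL : LambdaRecursion n L) (hn : 2 ≤ n) (hinit : ∀ i ≤ n, 0 < L 0 i) :
    ∀ m, ∀ i ≤ n, 0 < L m i := by
  intro m
  induction m with
  | zero => exact hinit
  | succ m ih =>
    have h0 := ih 0 (by omega)
    have h1 := ih 1 (by omega)
    have h2 := ih 2 (by omega)
    intro i hi
    match i with
    | 0 => rw [hL.zero]; exact h2
    | 1 => rw [hL.one]; exact h1
    | 2 => rw [hL.two]; positivity
    | j + 3 =>
      have hj := ih (j + 3) hi
      rw [hL.of_three_le m (j + 3) (by omega) hi]
      positivity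

theorem height_succ (hL : LambdaRecursion n L) (hn : 2 ≤ n) {m : ℕ} (h0 : L m 0 ≠ 0) :
    height n L (m + 1) = (L m 1 + L m 2) / L m 0 * height n L m := by
  have hrest : ∑ i ∈ Finset.Icc 3 n, L (m + 1) i
      = (L m 1 + L m 2) / L m 0 * ∑ i ∈ Finset.Icc 3 n, L m i := by
    rw [Finset.mul_sum]
    refine Finset.sum_congr rfl fun i hi => ?_
    rw [Finset.mem_Icc] at hi
    rw [hL.of_three_le m i hi.1 hi.2]
    ring
  rw [height_eq hn, height_eq hn, hrest, hL.zero, hL.one, hL.two]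
  field_simp
  ring

theorem ratio_succ (hL : LambdaRecursion n L) (hn : 2 ≤ n) {m : ℕ} (hpos : ∀ i ≤ n, 0 < L m i) :
    L (m + 1) 0 * L (m + 1) 1 / height n L (m + 1)
      = L m 0 * L m 1 / height n L m * (L m 2 / (L m 1 + L m 2)) := by
  have h0 := hpos 0 (by omega)
  have h1 := hpos 1 (by omega)
  have h2 := hpos 2 (by omega)
  have hH := (height_pos hpos).ne'
  rw [hL.height_succ hn h0.ne', hL.zero, hL.one]
  field_simp

theorem ratio_strictAnti (hL : LambdaRecursion n L) (hn : 2 ≤ n) (hinit : ∀ i ≤ n, 0 < L 0 i) :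
    StrictAnti fun m => L m 0 * L m 1 / height n L m := by
  refine strictAnti_nat_of_succ_lt fun m => ?_
  have hpos := hL.pos hn hinit m
  have h0 := hpos 0 (by omega)
  have h1 := hpos 1 (by omega)
  have h2 := hpos 2 (by omega)
  have hH := height_pos hpos
  rw [hL.ratio_succ hn hpos]
  refine mul_lt_of_lt_one_right (by positivity) ?_
  rw [div_lt_one (by positivity)]
  linarith

end LambdaRecursion

theorem lambda_height_bound
    (n a : ℕ) (hn : 4 ≤ n) (ha : a ≤ n - 2)
    (y : ℕ → ℕ)
    (hy0 : y 0 = 2)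
    (hy : ∀ m, 1 ≤ m → y m = 1 + ∏ i ∈ Finset.range m, y i)
    (k : ℕ → ℕ)
    (hk : Set.BijOn k (Set.Icc 3 n) (Set.Iic (n - 2) \ {a}))
    (L : ℕ → ℕ → ℚ)
    (hL00 : L 0 0 = 1)
    (hL01 : L 0 1 = 2 * ((y (n - 1) : ℚ) - 1) / (y a : ℚ))
    (hL02 : L 0 2 = 1)
    (hL0i : ∀ i, 3 ≤ i → i ≤ n → L 0 i = 2 * ((y (n - 1) : ℚ) - 1) / (y (k i) : ℚ))
    (hR0 : ∀ m, L (m + 1) 0 = L m 2)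
    (hR1 : ∀ m, L (m + 1) 1 = L m 1)
    (hR2 : ∀ m, L (m + 1) 2 = (L m 1 + L m 2) ^ 2 / L m 0)
    (hRi : ∀ m i, 3 ≤ i → i ≤ n → L (m + 1) i = L m i * (L m 1 + L m 2) / L m 0)
    : ∀ m, 1 ≤ m →
      L m 0 * L m 1 / (∑ i ∈ Finset.range (n + 1), L m i) <
        1 / (2 * ((y (n - 1) : ℚ) - 1)) := by
  intro m hm
  have hn2 : 2 ≤ n := by omega
  have hsyl : IsSylvesterSeq y := ⟨hy0, hy⟩
  have hL : LambdaRecursion n L := ⟨hR0, hR1, hR2, hRi⟩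
  have ht := hsyl.sub_one_pos (n - 1)
  have hb : 0 < L 0 1 := by
    rw [hL01]
    exact div_pos (by positivity) (by exact_mod_cast hsyl.pos a)
  have hpos : ∀ i ≤ n, 0 < L 0 i := by
    intro i hi
    rcases (by omega : i = 0 ∨ i = 1 ∨ i = 2 ∨ 3 ≤ i) with rfl | rfl | rfl | hi3
    · rw [hL00]; exact one_pos
    · exact hb
    · rw [hL02]; exact one_pos
    · rw [hL0i i hi3 hi]
      exact div_pos (by positivity) (by exact_mod_cast hsyl.pos (k i))
  calc L m 0 * L m 1 / height n L m
      ≤ L 1 0 * L 1 1 / height n L 1 := (hL.ratio_strictAnti hn2 hpos).antitone hm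
    _ = 1 / (2 * ((y (n - 1) : ℚ) - 1)) * (L 0 1 / (L 0 1 + 1)) := by
      rw [hL.ratio_succ hn2 hpos, height_zero_eq hn2 ha hsyl hk hL00 hL01 hL02 hL0i, hL00, hL02]
      ring
    _ < 1 / (2 * ((y (n - 1) : ℚ) - 1)) :=
      mul_lt_of_lt_one_right (by positivity) ((div_lt_one (by positivity)).mpr (by linarith))
end

section
/- For every m ≥ 0 and every i ∈ {3,…,n}, the Sylvester number y_{k_i} divides λ_2^(m,a) - λ_0^(m,a). -/
/-- Auxiliary linear recurrence `v 0 = v 1 = 1`, `v (m+2) = (s+2) v (m+1) - v m`. -/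
def vseq (s : ℤ) : ℕ → ℤ
  | 0 => 1
  | 1 => 1
  | (m + 2) => (s + 2) * vseq s (m + 1) - vseq s m

lemma vseq_zero (s : ℤ) : vseq s 0 = 1 := rfl
lemma vseq_one (s : ℤ) : vseq s 1 = 1 := rfl
lemma vseq_rec (s : ℤ) (m : ℕ) :
    vseq s (m + 2) = (s + 2) * vseq s (m + 1) - vseq s m := rfl

lemma vseq_pos (s : ℤ) (hs : 0 ≤ s) :
    ∀ m, 1 ≤ vseq s m ∧ vseq s m ≤ vseq s (m + 1) := by
  intro m
  induction m using Nat.strong_induction_on with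
  | _ m ih =>
    match m with
    | 0 => simp [vseq_zero, vseq_one]
    | 1 =>
      refine ⟨by simp [vseq_one], ?_⟩
      rw [vseq_rec, vseq_zero, vseq_one]
      nlinarith
    | (m + 2) =>
      obtain ⟨h1, h2⟩ := ih m (by omega)
      obtain ⟨h3, h4⟩ := ih (m + 1) (by omega)
      have hA : 1 ≤ vseq s (m + 2) := by rw [vseq_rec]; nlinarith
      refine ⟨hA, ?_⟩
      rw [vseq_rec s (m + 1)]
      have hB : 0 ≤ s * vseq s (m + 2) :=
        mul_nonneg hs (by linarith)
      linarith

lemma vseq_id (s : ℤ) (m : ℕ) :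
    vseq s (m + 2) * vseq s m = s + (vseq s (m + 1)) ^ 2 := by
  induction m with
  | zero => rw [vseq_rec, vseq_zero, vseq_one]; ring
  | succ m ih =>
    have hdef := vseq_rec s m
    rw [vseq_rec s (m + 1)]
    linear_combination ih - vseq s (m + 2) * hdef

lemma vseq_mod (s : ℤ) (d : ℤ) (hd : d ∣ s) :
    ∀ m, d ∣ vseq s (m + 1) - vseq s m := by
  intro m
  induction m with
  | zero => simp [vseq_zero, vseq_one]
  | succ m ih =>
    rw [vseq_rec]
    have : (s + 2) * vseq s (m + 1) - vseq s m - vseq s (m + 1)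
        = s * vseq s (m + 1) + (vseq s (m + 1) - vseq s m) := by ring
    rw [this]
    exact dvd_add (hd.mul_right _) ih

theorem lambda_two_minus_zero_divisible
    (n a : ℕ) (hn : 4 ≤ n) (ha : a ≤ n - 2)
    (y : ℕ → ℕ)
    (hy0 : y 0 = 2)
    (hy : ∀ m, 1 ≤ m → y m = 1 + ∏ i ∈ Finset.range m, y i)
    (k : ℕ → ℕ)
    (hk : Set.BijOn k (Set.Icc 3 n) (Set.Iic (n - 2) \ {a}))
    (L : ℕ → ℕ → ℚ)
    (hL00 : L 0 0 = 1)
    (hL01 : L 0 1 = 2 * ((y (n - 1) : ℚ) - 1) / (y a : ℚ))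
    (hL02 : L 0 2 = 1)
    (hL0i : ∀ i, 3 ≤ i → i ≤ n → L 0 i = 2 * ((y (n - 1) : ℚ) - 1) / (y (k i) : ℚ))
    (hR0 : ∀ m, L (m + 1) 0 = L m 2)
    (hR1 : ∀ m, L (m + 1) 1 = L m 1)
    (hR2 : ∀ m, L (m + 1) 2 = (L m 1 + L m 2) ^ 2 / L m 0)
    (hRi : ∀ m i, 3 ≤ i → i ≤ n → L (m + 1) i = L m i * (L m 1 + L m 2) / L m 0)
    : ∀ m i, 3 ≤ i → i ≤ n → QDvd (y (k i)) (L m 2 - L m 0) := by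
  -- positivity of y
  have ypos : ∀ m, 1 ≤ y m := by
    intro m
    match m with
    | 0 => omega
    | (m + 1) => rw [hy (m + 1) (by omega)]; omega
  -- pairwise coprimality
  have ycop : ∀ j l, j < l → Nat.Coprime (y j) (y l) := by
    intro j l hjl
    have hdvd : y j ∣ ∏ i ∈ Finset.range l, y i :=
      Finset.dvd_prod_of_mem y (Finset.mem_range.mpr hjl)
    obtain ⟨e, he⟩ := hdvd
    rw [hy l (by omega), he]
    simpa using (Nat.coprime_add_mul_right_right (y j) 1 e).mpr (Nat.coprime_one_right _)
  -- the product t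
  set t : ℕ := ∏ i ∈ Finset.range (n - 1), y i with ht
  have htpos : 0 < t := Finset.prod_pos (fun i _ => ypos i)
  have hyn1 : (y (n - 1) : ℚ) - 1 = (t : ℚ) := by
    rw [hy (n - 1) (by omega), ht]
    push_cast
    ring
  have hat : y a ∣ t := Finset.dvd_prod_of_mem y (Finset.mem_range.mpr (by omega))
  obtain ⟨c, hc⟩ := hat
  have hcpos : 1 ≤ c := by
    rcases Nat.eq_zero_or_pos c with h | h
    · subst h; omega
    · exact h
  set s : ℕ := 2 * c with hs
  have hyane : (y a : ℚ) ≠ 0 := by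
    have := ypos a; positivity
  have hL01' : L 0 1 = (s : ℚ) := by
    have h : (s : ℚ) * (y a : ℚ) = 2 * ((y (n - 1) : ℚ) - 1) := by
      rw [hyn1, hs, hc]; push_cast; ring
    rw [hL01, ← h]
    field_simp
  set sZ : ℤ := (s : ℤ) with hsZ
  have hsZpos : 0 ≤ sZ := by positivity
  -- key invariant
  have key : ∀ m, L m 0 = ((vseq sZ m : ℤ) : ℚ) ^ 2 ∧ L m 1 = ((sZ : ℤ) : ℚ)
      ∧ L m 2 = ((vseq sZ (m + 1) : ℤ) : ℚ) ^ 2 := by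
    intro m
    induction m with
    | zero =>
      refine ⟨by rw [hL00, vseq_zero]; norm_num, by rw [hL01', hsZ]; push_cast; ring, ?_⟩
      rw [hL02, vseq_one]; norm_num
    | succ m ih =>
      obtain ⟨h0, h1, h2⟩ := ih
      have hvne : ((vseq sZ m : ℤ) : ℚ) ≠ 0 := by
        have := (vseq_pos sZ hsZpos m).1
        intro h
        exact absurd (by exact_mod_cast h : vseq sZ m = 0) (by omega)
      refine ⟨by rw [hR0, h2], by rw [hR1, h1], ?_⟩
      rw [hR2, h0, h1, h2]
      have hid := vseq_id sZ m
      have hidQ : ((sZ : ℤ) : ℚ) + ((vseq sZ (m + 1) : ℤ) : ℚ) ^ 2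
          = ((vseq sZ (m + 2) : ℤ) : ℚ) * ((vseq sZ m : ℤ) : ℚ) := by
        exact_mod_cast hid.symm
      rw [hidQ]
      field_simp
  -- final divisibility
  intro m i hi3 hin
  have hki : k i ∈ Set.Iic (n - 2) \ {a} := hk.1 ⟨hi3, hin⟩
  have hkile : k i ≤ n - 2 := hki.1
  have hkia : k i ≠ a := hki.2
  set q : ℕ := y (k i) with hq
  -- q divides t
  have hqt : q ∣ t := Finset.dvd_prod_of_mem y (Finset.mem_range.mpr (by omega))
  -- q coprime to y a
  have hcop : Nat.Coprime q (y a) := by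
    rcases lt_or_gt_of_ne hkia with h | h
    · exact ycop _ _ h
    · exact (ycop _ _ h).symm
  -- q divides s
  have hqs : q ∣ s := by
    have h2t : q ∣ y a * s := by
      have : y a * s = 2 * t := by rw [hs, hc]; ring
      rw [this]
      exact hqt.mul_left 2
    exact hcop.dvd_of_dvd_mul_left h2t
  have hqsZ : (q : ℤ) ∣ sZ := Int.natCast_dvd_natCast.mpr hqs
  have hvd : (q : ℤ) ∣ vseq sZ (m + 1) - vseq sZ m := vseq_mod sZ _ hqsZ m
  have hvd2 : (q : ℤ) ∣ (vseq sZ (m + 1)) ^ 2 - (vseq sZ m) ^ 2 := by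
    have : (vseq sZ (m + 1)) ^ 2 - (vseq sZ m) ^ 2
        = (vseq sZ (m + 1) - vseq sZ m) * (vseq sZ (m + 1) + vseq sZ m) := by ring
    rw [this]
    exact hvd.mul_right _
  obtain ⟨d, hd⟩ := hvd2
  refine ⟨d, ?_⟩
  obtain ⟨h0, _, h2⟩ := key m
  rw [h2, h0]
  have : ((vseq sZ (m + 1) : ℤ) : ℚ) ^ 2 - ((vseq sZ m : ℤ) : ℚ) ^ 2
      = (((vseq sZ (m + 1)) ^ 2 - (vseq sZ m) ^ 2 : ℤ) : ℚ) := by push_cast; ring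
  rw [this, hd]
  push_cast
  ring
end

section
/- In the 'terminal' weight system (with t_{n-1}/y in place of 2t_{n-1}/y), assuming n ≥ 5: for any distinct i, j ∈ {3,…,n} there exists a prime p such that for all m ≥ 0, p divides λ_1^(m,a), λ_i^(m,a), and λ_j^(m,a), but p divides neither λ_0^(m,a) nor λ_2^(m,a). -/
/-!
Starting from `λ₀ = λ₂ = 1`, the recurrence keeps `λ₁ = A` constant and is solved by
`λ₀^(m) = w_m²`, `λ₂^(m) = w_{m+1}²`, `λ_i^(m) = λ_i^(0) w_{m+1} w_m`, where `w = mutationSeq A`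
is the integer sequence `w₀ = w₁ = 1`, `w_{m+2} = (A + 2) w_{m+1} - w_m`, which satisfies
`w_{m+2} w_m = w_{m+1}² + A`. The initial weights `t_{n-1} / y_c` are the products of the
Sylvester numbers `y_0, …, y_{n-2}` with `y_c` omitted. As `n ≥ 5`, some `b ≤ n - 2` differs from
`a`, `k_i`, `k_j`, and any prime `p ∣ y_b` divides `A`, `λ_i^(0)` and `λ_j^(0)`. Then
`w_m ≡ 1 (mod p)`, so `p` divides neither `λ₀^(m)` nor `λ₂^(m)`.
-/

open Finset

def mutationSeq (A : ℤ) : ℕ → ℤ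
  | 0 => 1
  | 1 => 1
  | m + 2 => (A + 2) * mutationSeq A (m + 1) - mutationSeq A m

theorem mutationSeq_succ_succ (A : ℤ) (m : ℕ) :
    mutationSeq A (m + 2) = (A + 2) * mutationSeq A (m + 1) - mutationSeq A m := rfl

theorem one_le_mutationSeq_and_le_succ {A : ℤ} (hA : 0 ≤ A) :
    ∀ m, 1 ≤ mutationSeq A m ∧ mutationSeq A m ≤ mutationSeq A (m + 1)
  | 0 => ⟨le_rfl, le_rfl⟩
  | m + 1 => by
    obtain ⟨h1, h2⟩ := one_le_mutationSeq_and_le_succ hA m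
    refine ⟨h1.trans h2, ?_⟩
    rw [mutationSeq_succ_succ]
    nlinarith

theorem mutationSeq_ne_zero {A : ℤ} (hA : 0 ≤ A) (m : ℕ) : mutationSeq A m ≠ 0 :=
  (zero_lt_one.trans_le (one_le_mutationSeq_and_le_succ hA m).1).ne'

theorem mutationSeq_mul_eq (A : ℤ) : ∀ m,
    mutationSeq A (m + 2) * mutationSeq A m = mutationSeq A (m + 1) ^ 2 + A
  | 0 => by simp [mutationSeq]; ring
  | m + 1 => by
    rw [mutationSeq_succ_succ A (m + 1)]
    linear_combination mutationSeq_mul_eq A m - mutationSeq A (m + 2) * mutationSeq_succ_succ A m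

theorem mutationSeq_modEq_one {A d : ℤ} (hd : d ∣ A) : ∀ m, mutationSeq A m ≡ 1 [ZMOD d]
  | 0 => Int.ModEq.refl 1
  | 1 => Int.ModEq.refl 1
  | m + 2 => by
    have hA : A ≡ 0 [ZMOD d] := Int.modEq_zero_iff_dvd.mpr hd
    rw [mutationSeq_succ_succ]
    simpa using ((hA.add_right 2).mul (mutationSeq_modEq_one hd (m + 1))).sub
      (mutationSeq_modEq_one hd m)

theorem not_dvd_mutationSeq_sq {A : ℤ} {p : ℕ} (hp : p.Prime) (hpA : (p : ℤ) ∣ A) (m : ℕ) :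
    ¬ (p : ℤ) ∣ mutationSeq A m ^ 2 := fun hdvd => by
  have hone : (p : ℤ) ∣ 1 := by
    simpa using ((mutationSeq_modEq_one hpA m).pow 2).dvd_iff.1 hdvd
  exact hp.not_dvd_one (Int.natCast_dvd_natCast.1 hone)

section Lambda

variable {L : ℕ → ℕ → ℚ}

theorem lambda_one_eq (hR1 : ∀ m, L (m + 1) 1 = L m 1) : ∀ m, L m 1 = L 0 1
  | 0 => rfl
  | m + 1 => (hR1 m).trans (lambda_one_eq hR1 m)

theorem lambda_zero_two_eq {A : ℤ} (hA : 0 ≤ A)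
    (h00 : L 0 0 = 1) (h01 : L 0 1 = A) (h02 : L 0 2 = 1)
    (hR0 : ∀ m, L (m + 1) 0 = L m 2) (hR1 : ∀ m, L (m + 1) 1 = L m 1)
    (hR2 : ∀ m, L (m + 1) 2 = (L m 1 + L m 2) ^ 2 / L m 0) :
    ∀ m, L m 0 = ((mutationSeq A m ^ 2 : ℤ) : ℚ) ∧
      L m 2 = ((mutationSeq A (m + 1) ^ 2 : ℤ) : ℚ)
  | 0 => by simp [h00, h02, mutationSeq]
  | m + 1 => by
    obtain ⟨ih0, ih2⟩ := lambda_zero_two_eq hA h00 h01 h02 hR0 hR1 hR2 m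
    refine ⟨(hR0 m).trans ih2, ?_⟩
    have hw : (mutationSeq A m : ℚ) ≠ 0 := by exact_mod_cast mutationSeq_ne_zero hA m
    have hrec : ((mutationSeq A (m + 2) * mutationSeq A m : ℤ) : ℚ) =
        ((mutationSeq A (m + 1) ^ 2 + A : ℤ) : ℚ) := congrArg _ (mutationSeq_mul_eq A m)
    push_cast at ih0 ih2 hrec ⊢
    rw [hR2, ih0, ih2, lambda_one_eq hR1, h01, div_eq_iff (pow_ne_zero 2 hw)]
    linear_combination (-(A + mutationSeq A (m + 1) ^ 2 +
      mutationSeq A (m + 2) * mutationSeq A m : ℚ)) * hrec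

theorem lambda_eq_mul {A : ℤ} (hA : 0 ≤ A)
    (h0 : ∀ m, L m 0 = ((mutationSeq A m ^ 2 : ℤ) : ℚ)) (h1 : ∀ m, L m 1 = A)
    (h2 : ∀ m, L m 2 = ((mutationSeq A (m + 1) ^ 2 : ℤ) : ℚ))
    {i : ℕ} (hRi : ∀ m, L (m + 1) i = L m i * (L m 1 + L m 2) / L m 0) :
    ∀ m, L m i = L 0 i * ((mutationSeq A (m + 1) * mutationSeq A m : ℤ) : ℚ)
  | 0 => by simp [mutationSeq]
  | m + 1 => by
    have hw : (mutationSeq A m : ℚ) ≠ 0 := by exact_mod_cast mutationSeq_ne_zero hA m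
    have hrec : ((mutationSeq A (m + 2) * mutationSeq A m : ℤ) : ℚ) =
        ((mutationSeq A (m + 1) ^ 2 + A : ℤ) : ℚ) := congrArg _ (mutationSeq_mul_eq A m)
    have ih := lambda_eq_mul hA h0 h1 h2 hRi m
    push_cast at ih hrec h0 h2 ⊢
    rw [hRi, ih, h0, h1, h2, div_eq_iff (pow_ne_zero 2 hw)]
    linear_combination (-(L 0 i * mutationSeq A (m + 1) * mutationSeq A m)) * hrec

end Lambda

section Sylvester

variable {y : ℕ → ℕ}

theorem two_le_of_sylvester (hy0 : 2 ≤ y 0)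
    (hy : ∀ m, 1 ≤ m → y m = 1 + ∏ i ∈ range m, y i) (m : ℕ) : 2 ≤ y m := by
  induction m using Nat.strong_induction_on with
  | _ m ih =>
    rcases m with _ | m
    · exact hy0
    · have hprod : 1 ≤ ∏ c ∈ range (m + 1), y c :=
        one_le_prod' fun c hc => (ih c (mem_range.mp hc)).trans' one_le_two
      rw [hy (m + 1) m.succ_pos]
      omega

theorem sylvester_sub_one_div {N c : ℕ} (hN : y N = 1 + ∏ i ∈ range N, y i)
    (hc : c ∈ range N) (hyc : y c ≠ 0) :
    ((y N : ℚ) - 1) / y c = ((∏ d ∈ (range N).erase c, y d : ℕ) : ℚ) := by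
  rw [div_eq_iff (by exact_mod_cast hyc), hN, ← mul_prod_erase _ _ hc]
  push_cast
  ring

theorem sylvester_sub_one_div_eq_natCast_dvd (hy0 : 2 ≤ y 0)
    (hy : ∀ m, 1 ≤ m → y m = 1 + ∏ i ∈ range m, y i) {N b : ℕ} (hN : 1 ≤ N)
    (hb : b ∈ range N) (c : ℕ) (hc : c ∈ range N) (hcb : c ≠ b) :
    ∃ B : ℕ, y b ∣ B ∧ ((y N : ℚ) - 1) / y c = B :=
  ⟨_, dvd_prod_of_mem y (mem_erase.2 ⟨hcb.symm, hb⟩),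
    sylvester_sub_one_div (hy N hN) hc (zero_lt_two.trans_le (two_le_of_sylvester hy0 hy c)).ne'⟩

end Sylvester

theorem qDvd_intCast_iff (d : ℕ) (z : ℤ) : QDvd d z ↔ (d : ℤ) ∣ z :=
  ⟨fun ⟨c, hc⟩ => ⟨c, by exact_mod_cast hc⟩, fun ⟨c, hc⟩ => ⟨c, by rw [hc]; push_cast; rfl⟩⟩

theorem terminal_lambda_exists_prime
    (n a : ℕ) (hn : 5 ≤ n) (ha : a ≤ n - 2)
    (y : ℕ → ℕ)
    (hy0 : y 0 = 2)
    (hy : ∀ m, 1 ≤ m → y m = 1 + ∏ i ∈ Finset.range m, y i)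
    (k : ℕ → ℕ)
    (hk : Set.BijOn k (Set.Icc 3 n) (Set.Iic (n - 2) \ {a}))
    (L : ℕ → ℕ → ℚ)
    (hL00 : L 0 0 = 1)
    (hL01 : L 0 1 = ((y (n - 1) : ℚ) - 1) / (y a : ℚ))
    (hL02 : L 0 2 = 1)
    (hL0i : ∀ i, 3 ≤ i → i ≤ n → L 0 i = ((y (n - 1) : ℚ) - 1) / (y (k i) : ℚ))
    (hR0 : ∀ m, L (m + 1) 0 = L m 2)
    (hR1 : ∀ m, L (m + 1) 1 = L m 1)
    (hR2 : ∀ m, L (m + 1) 2 = (L m 1 + L m 2) ^ 2 / L m 0)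
    (hRi : ∀ m i, 3 ≤ i → i ≤ n → L (m + 1) i = L m i * (L m 1 + L m 2) / L m 0)
    : ∀ i j, 3 ≤ i → i ≤ n → 3 ≤ j → j ≤ n → i ≠ j →
      ∃ p : ℕ, p.Prime ∧ ∀ m,
        QDvd p (L m 1) ∧ QDvd p (L m i) ∧ QDvd p (L m j) ∧
        ¬ QDvd p (L m 0) ∧ ¬ QDvd p (L m 2) := by
  intro i j hi3 hin hj3 hjn _
  have hrange : ∀ c ≤ n - 2, c ∈ range (n - 1) := fun c hc => mem_range.2 (by omega)
  have hki := hrange _ (hk.mapsTo (⟨hi3, hin⟩ : i ∈ Set.Icc 3 n)).1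
  have hkj := hrange _ (hk.mapsTo (⟨hj3, hjn⟩ : j ∈ Set.Icc 3 n)).1
  obtain ⟨b, hb, hbs⟩ := exists_mem_notMem_of_card_lt_card (s := {a, k i, k j})
    (t := range (n - 1)) (card_le_three.trans_lt (by rw [card_range]; omega))
  simp only [mem_insert, mem_singleton, not_or] at hbs
  have hweight := sylvester_sub_one_div_eq_natCast_dvd hy0.ge hy (by omega : 1 ≤ n - 1) hb
  obtain ⟨A, hyA, hA⟩ := hweight a (hrange a ha) (Ne.symm hbs.1)
  obtain ⟨Bi, hyBi, hBi⟩ := hweight (k i) hki (Ne.symm hbs.2.1)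
  obtain ⟨Bj, hyBj, hBj⟩ := hweight (k j) hkj (Ne.symm hbs.2.2)
  rw [← hL01, ← Int.cast_natCast] at hA
  rw [← hL0i i hi3 hin, ← Int.cast_natCast] at hBi
  rw [← hL0i j hj3 hjn, ← Int.cast_natCast] at hBj
  set p := (y b).minFac
  have hp : p.Prime := Nat.minFac_prime (by have := two_le_of_sylvester hy0.ge hy b; omega)
  have hpy : ∀ {B : ℕ}, y b ∣ B → (p : ℤ) ∣ B := fun h =>
    Int.natCast_dvd_natCast.2 ((Nat.minFac_dvd _).trans h)
  have h02 := lambda_zero_two_eq (Int.natCast_nonneg A) hL00 hA hL02 hR0 hR1 hR2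
  have h1 : ∀ m, L m 1 = ((A : ℤ) : ℚ) := fun m => (lambda_one_eq hR1 m).trans hA
  have hlam : ∀ c, 3 ≤ c → c ≤ n → ∀ m, L m c = L 0 c *
      ((mutationSeq A (m + 1) * mutationSeq A m : ℤ) : ℚ) := fun c hc3 hcn =>
    lambda_eq_mul (Int.natCast_nonneg A) (fun m => (h02 m).1) h1 (fun m => (h02 m).2)
      (hRi · c hc3 hcn)
  refine ⟨p, hp, fun m => ?_⟩
  rw [(h02 m).1, (h02 m).2, h1, hlam i hi3 hin m, hlam j hj3 hjn m, hBi, hBj,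
    ← Int.cast_mul, ← Int.cast_mul]
  simp only [qDvd_intCast_iff]
  exact ⟨hpy hyA, (hpy hyBi).mul_right _, (hpy hyBj).mul_right _,
    not_dvd_mutationSeq_sq hp (hpy hyA) m, not_dvd_mutationSeq_sq hp (hpy hyA) (m + 1)⟩
end

section
/- In the terminal weight system, for m ≥ 1 and κ^(m,a) := h^(m,a) - h^(m-1,a), the fractional part of κ^(m,a)·λ_2^(m,a)/h^(m,a) is 0, and for each i ∈ {3,…,n} the fractional part of κ^(m,a)·λ_i^(m,a)/h^(m,a) is 0; consequently the sum over i = 0,…,n of the fractional parts {κ^(m,a)·λ_i^(m,a)/h^(m,a)} is strictly less than 2. -/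
private def wrec (c : ℤ) : ℕ → ℤ
  | 0 => 1
  | 1 => 1
  | m + 2 => (c + 2) * wrec c (m + 1) - wrec c m

private lemma wrec_inv (c : ℤ) : ∀ m, wrec c (m+1) ^ 2 + wrec c m ^ 2
    - (c + 2) * (wrec c (m+1) * wrec c m) = -c := by
  intro m
  induction m with
  | zero => simp [wrec]
  | succ p ih =>
      rw [show wrec c (p+2) = (c+2) * wrec c (p+1) - wrec c p from rfl]
      linear_combination ih

private lemma wrec_prod (c : ℤ) (m : ℕ) :
    wrec c (m+2) * wrec c m = wrec c (m+1) ^ 2 + c := by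
  rw [show wrec c (m+2) = (c+2) * wrec c (m+1) - wrec c m from rfl]
  linear_combination -wrec_inv c m

private lemma wrec_ge (c : ℤ) (hc : 0 ≤ c) : ∀ m, 1 ≤ wrec c m ∧ wrec c m ≤ wrec c (m+1) := by
  intro m
  induction m with
  | zero => simp [wrec]
  | succ p ih =>
      have h2 : wrec c (p+2) = (c+2) * wrec c (p+1) - wrec c p := rfl
      refine ⟨le_trans ih.1 ih.2, ?_⟩
      rw [h2]; nlinarith [ih.1, ih.2]

theorem terminal_not_terminal_fractional_parts
    (n a : ℕ) (hn : 5 ≤ n) (ha : a ≤ n - 2)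
    (y : ℕ → ℕ)
    (hy0 : y 0 = 2)
    (hy : ∀ m, 1 ≤ m → y m = 1 + ∏ i ∈ Finset.range m, y i)
    (k : ℕ → ℕ)
    (hk : Set.BijOn k (Set.Icc 3 n) (Set.Iic (n - 2) \ {a}))
    (L : ℕ → ℕ → ℚ)
    (hL00 : L 0 0 = 1)
    (hL01 : L 0 1 = ((y (n - 1) : ℚ) - 1) / (y a : ℚ))
    (hL02 : L 0 2 = 1)
    (hL0i : ∀ i, 3 ≤ i → i ≤ n → L 0 i = ((y (n - 1) : ℚ) - 1) / (y (k i) : ℚ))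
    (hR0 : ∀ m, L (m + 1) 0 = L m 2)
    (hR1 : ∀ m, L (m + 1) 1 = L m 1)
    (hR2 : ∀ m, L (m + 1) 2 = (L m 1 + L m 2) ^ 2 / L m 0)
    (hRi : ∀ m i, 3 ≤ i → i ≤ n → L (m + 1) i = L m i * (L m 1 + L m 2) / L m 0)
    : ∀ m, 1 ≤ m →
      Int.fract (((∑ i ∈ Finset.range (n + 1), L m i) -
          (∑ i ∈ Finset.range (n + 1), L (m - 1) i)) * L m 2 /
          (∑ i ∈ Finset.range (n + 1), L m i)) = 0 ∧
      (∀ i, 3 ≤ i → i ≤ n →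
        Int.fract (((∑ j ∈ Finset.range (n + 1), L m j) -
          (∑ j ∈ Finset.range (n + 1), L (m - 1) j)) * L m i /
          (∑ j ∈ Finset.range (n + 1), L m j)) = 0) ∧
      (∑ i ∈ Finset.range (n + 1),
        Int.fract (((∑ j ∈ Finset.range (n + 1), L m j) -
          (∑ j ∈ Finset.range (n + 1), L (m - 1) j)) * L m i /
          (∑ j ∈ Finset.range (n + 1), L m j))) < 2 := by
  -- positivity of y
  have hypos : ∀ i, 0 < y i := by
    intro i
    cases i with
    | zero => rw [hy0]; norm_num
    | succ j =>
        rw [hy (j+1) (by omega)]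
        positivity
  set P : ℕ := ∏ i ∈ Finset.range (n-1), y i with hPdef
  have hcast : (y (n-1) : ℚ) - 1 = (P : ℚ) := by
    rw [hy (n-1) (by omega), hPdef]; push_cast; ring
  have hdvd : ∀ b, b ≤ n-2 → y b ∣ P :=
    fun b hb => Finset.dvd_prod_of_mem y (Finset.mem_range.mpr (by omega))
  set N : ℕ := P / y a with hNdef
  have hc1 : L 0 1 = (N : ℚ) := by
    rw [hL01, hcast, hNdef,
      Nat.cast_div (hdvd a ha) (by exact_mod_cast (hypos a).ne')]
  set d : ℕ → ℕ := fun i => P / y (k i) with hddef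
  have hdi : ∀ i, 3 ≤ i → i ≤ n → L 0 i = ((d i : ℕ) : ℚ) := by
    intro i h3 hn'
    have hki : k i ≤ n - 2 :=
      Set.mem_Iic.mp (hk.mapsTo (Set.mem_Icc.mpr ⟨h3, hn'⟩)).1
    rw [hL0i i h3 hn', hcast, hddef]
    rw [Nat.cast_div (hdvd _ hki) (by exact_mod_cast (hypos (k i)).ne')]
  set T : ℕ := ∑ i ∈ Finset.Ico 3 (n+1), d i with hTdef
  have hTsum : ∑ i ∈ Finset.Ico 3 (n+1), L 0 i = (T : ℚ) := by
    rw [hTdef]; push_cast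
    refine Finset.sum_congr rfl ?_
    intro i hi
    rw [Finset.mem_Ico] at hi
    exact hdi i hi.1 (by omega)
  set c : ℤ := (N : ℤ) with hcdef
  set W : ℕ → ℚ := fun m => ((wrec c m : ℤ) : ℚ) with hWdef
  have Wprod : ∀ m, W (m+2) * W m = W (m+1)^2 + (N : ℚ) := by
    intro m
    have h := congrArg (fun z : ℤ => (z : ℚ)) (wrec_prod c m)
    simp only [hWdef, hcdef] at *
    push_cast at h ⊢
    linarith [h]
  have Wpos : ∀ m, (1:ℚ) ≤ W m := by
    intro m
    have := (wrec_ge c (by positivity) m).1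
    simp only [hWdef]
    exact_mod_cast this
  have Wne : ∀ m, W m ≠ 0 := fun m => by have := Wpos m; positivity
  have w0 : W 0 = 1 := by simp [hWdef, wrec]
  have w1 : W 1 = 1 := by simp [hWdef, wrec]
  -- structural description of all weights
  have key : ∀ m, L m 0 = W m ^ 2 ∧ L m 1 = (N:ℚ) ∧ L m 2 = W (m+1) ^ 2 ∧
      ∀ i, 3 ≤ i → i ≤ n → L m i = L 0 i * (W m * W (m+1)) := by
    intro m
    induction m with
    | zero =>
        refine ⟨by rw [hL00, w0]; ring, hc1, by rw [hL02, w1]; ring, ?_⟩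
        intro i h3 hn'
        rw [w0, w1]; ring
    | succ p ih =>
        obtain ⟨i0, i1, i2, ii⟩ := ih
        have e2 : p + 1 + 1 = p + 2 := rfl
        rw [e2]
        have hw := Wprod p
        have h0 := Wne p
        refine ⟨by rw [hR0 p, i2], by rw [hR1 p, i1], ?_, ?_⟩
        · rw [hR2 p, i0, i1, i2, div_eq_iff (pow_ne_zero 2 h0)]
          linear_combination (-(W (p+2) * W p + W (p+1)^2 + (N:ℚ))) * hw
        · intro i h3 hn'
          rw [hRi p i h3 hn', ii i h3 hn', i0, i1, i2,
            div_eq_iff (pow_ne_zero 2 h0)]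
          linear_combination (-(L 0 i * W p * W (p+1))) * hw
  -- sum formula
  have hsum : ∀ m, ∑ i ∈ Finset.range (n+1), L m i
      = W m ^ 2 + (N:ℚ) + W (m+1)^2 + (T:ℚ) * (W m * W (m+1)) := by
    intro m
    obtain ⟨i0, i1, i2, ii⟩ := key m
    have hsplit : ∑ i ∈ Finset.range (n+1), L m i
        = (∑ i ∈ Finset.Ico 0 3, L m i) + ∑ i ∈ Finset.Ico 3 (n+1), L m i := by
      rw [Finset.range_eq_Ico,
        Finset.sum_Ico_consecutive (fun i => L m i) (by omega : (0:ℕ) ≤ 3) (by omega : 3 ≤ n+1)]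
    have h012 : ∑ i ∈ Finset.Ico 0 3, L m i = L m 0 + L m 1 + L m 2 := by
      rw [← Finset.range_eq_Ico]
      rw [Finset.sum_range_succ, Finset.sum_range_succ, Finset.sum_range_one]
    have htail : ∑ i ∈ Finset.Ico 3 (n+1), L m i = (T:ℚ) * (W m * W (m+1)) := by
      have h1 : ∑ i ∈ Finset.Ico 3 (n+1), L m i
          = ∑ i ∈ Finset.Ico 3 (n+1), L 0 i * (W m * W (m+1)) :=
        Finset.sum_congr rfl (fun i hi => by
          rw [Finset.mem_Ico] at hi
          exact ii i hi.1 (by omega))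
      rw [h1, ← Finset.sum_mul, hTsum]
    rw [hsplit, h012, htail, i0, i1, i2]
  intro m hm
  obtain ⟨p, rfl⟩ : ∃ p, m = p + 1 := ⟨m - 1, by omega⟩
  simp only [Nat.add_sub_cancel]
  set G : ℚ := W p + W (p+2) + (T:ℚ) * W (p+1) with hGdef
  have hGpos : 0 < G := by
    have := Wpos p; have := Wpos (p+1); have := Wpos (p+2)
    have hT0 : (0:ℚ) ≤ (T:ℚ) := by positivity
    nlinarith
  have hA : ∑ i ∈ Finset.range (n+1), L (p+1) i = W (p+2) * G := by
    rw [hsum (p+1), hGdef, show p+1+1 = p+2 from rfl]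
    linear_combination -Wprod p
  have hB : ∑ i ∈ Finset.range (n+1), L p i = W p * G := by
    rw [hsum p, hGdef]
    linear_combination -Wprod p
  have hApos : (0:ℚ) < W (p+2) * G := by
    have := Wpos (p+2); nlinarith
  have hAne : ∑ i ∈ Finset.range (n+1), L (p+1) i ≠ 0 := by rw [hA]; exact ne_of_gt hApos
  obtain ⟨j0, j1, j2, jj⟩ := key (p+1)
  -- part 1
  have part1 : Int.fract (((∑ i ∈ Finset.range (n + 1), L (p+1) i) -
      (∑ i ∈ Finset.range (n + 1), L p i)) * L (p+1) 2 /
      (∑ i ∈ Finset.range (n + 1), L (p+1) i)) = 0 := by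
    have hval : ((∑ i ∈ Finset.range (n + 1), L (p+1) i) -
        (∑ i ∈ Finset.range (n + 1), L p i)) * L (p+1) 2 /
        (∑ i ∈ Finset.range (n + 1), L (p+1) i)
        = (((wrec c (p+2) - wrec c p) * wrec c (p+2) : ℤ) : ℚ) := by
      rw [hA, hB, j2]
      have h2 : W (p+2) ≠ 0 := Wne (p+2)
      have hG : G ≠ 0 := ne_of_gt hGpos
      have hcw : (((wrec c (p+2) - wrec c p) * wrec c (p+2) : ℤ) : ℚ)
          = (W (p+2) - W p) * W (p+2) := by
        simp only [hWdef]; push_cast; ring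
      rw [hcw]
      field_simp
    rw [hval]
    exact Int.fract_intCast _
  -- part 2
  have part2 : ∀ i, 3 ≤ i → i ≤ n →
      Int.fract (((∑ j ∈ Finset.range (n + 1), L (p+1) j) -
        (∑ j ∈ Finset.range (n + 1), L p j)) * L (p+1) i /
        (∑ j ∈ Finset.range (n + 1), L (p+1) j)) = 0 := by
    intro i h3 hn'
    have hval : ((∑ j ∈ Finset.range (n + 1), L (p+1) j) -
        (∑ j ∈ Finset.range (n + 1), L p j)) * L (p+1) i /
        (∑ j ∈ Finset.range (n + 1), L (p+1) j)
        = (((wrec c (p+2) - wrec c p) * (d i : ℤ) * wrec c (p+1) : ℤ) : ℚ) := by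
      rw [hA, hB, jj i h3 hn', hdi i h3 hn']
      have h2 : W (p+2) ≠ 0 := Wne (p+2)
      have hG : G ≠ 0 := ne_of_gt hGpos
      have hcw : (((wrec c (p+2) - wrec c p) * (d i : ℤ) * wrec c (p+1) : ℤ) : ℚ)
          = (W (p+2) - W p) * (d i : ℚ) * W (p+1) := by
        simp only [hWdef]; push_cast; ring
      rw [hcw]
      field_simp
    rw [hval]
    exact Int.fract_intCast _
  refine ⟨part1, part2, ?_⟩
  -- part 3
  set F : ℕ → ℚ := fun i =>
    Int.fract (((∑ j ∈ Finset.range (n + 1), L (p+1) j) -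
      (∑ j ∈ Finset.range (n + 1), L p j)) * L (p+1) i /
      (∑ j ∈ Finset.range (n + 1), L (p+1) j)) with hFdef
  have hsplit : ∑ i ∈ Finset.range (n+1), F i
      = (∑ i ∈ Finset.Ico 0 2, F i) + ∑ i ∈ Finset.Ico 2 (n+1), F i := by
    rw [Finset.range_eq_Ico,
      Finset.sum_Ico_consecutive F (by omega : (0:ℕ) ≤ 2) (by omega : 2 ≤ n+1)]
  have htail : ∑ i ∈ Finset.Ico 2 (n+1), F i = 0 := by
    apply Finset.sum_eq_zero
    intro i hi
    rw [Finset.mem_Ico] at hi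
    rcases Nat.lt_or_ge i 3 with h | h
    · have : i = 2 := by omega
      rw [this]; exact part1
    · exact part2 i h (by omega)
  have h01 : ∑ i ∈ Finset.Ico 0 2, F i = F 0 + F 1 := by
    rw [← Finset.range_eq_Ico, Finset.sum_range_succ, Finset.sum_range_one]
  calc ∑ i ∈ Finset.range (n+1), F i = F 0 + F 1 := by rw [hsplit, htail, h01]; ring
    _ < 2 := by
        have := Int.fract_lt_one (((∑ j ∈ Finset.range (n + 1), L (p+1) j) -
          (∑ j ∈ Finset.range (n + 1), L p j)) * L (p+1) 0 /
          (∑ j ∈ Finset.range (n + 1), L (p+1) j))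
        have := Int.fract_lt_one (((∑ j ∈ Finset.range (n + 1), L (p+1) j) -
          (∑ j ∈ Finset.range (n + 1), L p j)) * L (p+1) 1 /
          (∑ j ∈ Finset.range (n + 1), L (p+1) j))
        simp only [hFdef]
        linarith
end

section
/- Let X and Y be fake weighted projective spaces related by a mutation over a facet (i.e. over an (n-1)-face), with X having well-formed weights λ_0, λ_1, …, λ_n where λ_0 corresponds to the vertex at maximal height. Then the normalization constant d in the mutation formula equals λ_0, and the multiplicities satisfy mult(X)/mult(Y) = (λ_0/(λ_1+…+λ_n))^{n-2}. -/
/-- A weight system is well-formed if any `n` of the `n + 1` weights are coprime. -/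
def WellFormed {n : ℕ} (w : Fin (n + 1) → ℕ) : Prop :=
  ∀ j : Fin (n + 1), (Finset.univ.erase j).gcd w = 1

theorem facet_mutation_multiplicity
    (n : ℕ) (hn : 2 ≤ n)
    (lam : Fin (n + 1) → ℕ) (hpos : ∀ i, 0 < lam i) (hwf : WellFormed lam)
    (mX mY : ℕ) (hmX : 0 < mX) (hmY : 0 < mY)
    (d : ℕ) (hd : 0 < d)
    (mu : Fin (n + 1) → ℕ) (hmupos : ∀ i, 0 < mu i) (hmuwf : WellFormed mu)
    -- the weights of `Y` are the facet-mutation weights, divided by `d`: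
    (hmu0 : d * mu 0 = lam 0 * lam 1)
    (hmu1 : d * mu 1 = (∑ i ∈ Finset.univ.erase 0, lam i) ^ 2)
    (hmui : ∀ i : Fin (n + 1), 2 ≤ (i : ℕ) →
      d * mu i = lam 0 * lam i)
    -- the relation `d · mult X / mult Y = λ₀^{n-1} / (λ₁ + … + λ_n)^{n-2}`:
    (hrel : d * mX * (∑ i ∈ Finset.univ.erase 0, lam i) ^ (n - 2) =
      lam 0 ^ (n - 1) * mY)
    : d = lam 0 ∧
      mX * (∑ i ∈ Finset.univ.erase 0, lam i) ^ (n - 2) =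
        mY * lam 0 ^ (n - 2) := by
  have hval1 : ((1 : Fin (n + 1)) : ℕ) = 1 := by
    have : 1 < n + 1 := by omega
    simp [Fin.val_one', Nat.mod_eq_of_lt this]
  -- d divides lam 0 * lam i for all i ≠ 0
  have hdvd : ∀ i ∈ Finset.univ.erase (0 : Fin (n + 1)), d ∣ lam 0 * lam i := by
    intro i hi
    have hi0 : i ≠ 0 := (Finset.mem_erase.mp hi).1
    by_cases h1 : i = 1
    · subst h1; exact ⟨mu 0, hmu0.symm⟩
    · have h2 : 2 ≤ (i : ℕ) := by
        have : (i : ℕ) ≠ 0 := fun h => hi0 (Fin.ext (by simpa using h))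
        have : (i : ℕ) ≠ 1 := fun h => h1 (Fin.ext (by rw [hval1]; exact h))
        omega
      exact ⟨mu i, (hmui i h2).symm⟩
  have hdl0 : d ∣ lam 0 := by
    have := Finset.dvd_gcd hdvd
    rw [Finset.gcd_mul_left, hwf 0, mul_one] at this; simpa using this
  obtain ⟨e, he⟩ := hdl0
  -- e divides mu i for all i ≠ 1
  have hedvd : ∀ i ∈ Finset.univ.erase (1 : Fin (n + 1)), e ∣ mu i := by
    intro i hi
    have hi1 : i ≠ 1 := (Finset.mem_erase.mp hi).1
    by_cases h0 : i = 0
    · subst h0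
      refine ⟨lam 1, ?_⟩
      have : d * mu 0 = d * (e * lam 1) := by
        rw [hmu0, he]; ring
      exact Nat.eq_of_mul_eq_mul_left hd this
    · have h2 : 2 ≤ (i : ℕ) := by
        have : (i : ℕ) ≠ 0 := fun h => h0 (Fin.ext (by simpa using h))
        have : (i : ℕ) ≠ 1 := fun h => hi1 (Fin.ext (by rw [hval1]; exact h))
        omega
      refine ⟨lam i, ?_⟩
      have : d * mu i = d * (e * lam i) := by
        rw [hmui i h2, he]; ring
      exact Nat.eq_of_mul_eq_mul_left hd this
  have he1 : e = 1 := by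
    have := Finset.dvd_gcd hedvd
    rw [hmuwf 1] at this
    exact Nat.eq_one_of_dvd_one this
  have hdl : d = lam 0 := by rw [he, he1, mul_one]
  refine ⟨hdl, ?_⟩
  have hrel' : lam 0 * (mX * (∑ i ∈ Finset.univ.erase 0, lam i) ^ (n - 2)) =
      lam 0 * (mY * lam 0 ^ (n - 2)) := by
    have hn1 : n - 1 = (n - 2) + 1 := by omega
    calc lam 0 * (mX * (∑ i ∈ Finset.univ.erase 0, lam i) ^ (n - 2))
        = d * mX * (∑ i ∈ Finset.univ.erase 0, lam i) ^ (n - 2) := by rw [hdl]; ring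
      _ = lam 0 ^ (n - 1) * mY := hrel
      _ = lam 0 * (mY * lam 0 ^ (n - 2)) := by rw [hn1]; ring
  exact Nat.eq_of_mul_eq_mul_left (hpos 0) hrel'
end
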